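/- arXiv:2310.20359 — 9 statements merged into one kernel-verified Lean document; each statement's English description precedes it below -/
import Mathlib

section
/- Every infinite crowded (i.e., without isolated points) Tychonoff space admits a continuous surjection onto either the discrete space of natural numbers ℕ or the closed unit interval [0,1]. -/
/-!
If some continuous real function has a range with nonempty interior, composing it with a
retraction onto a small interval inside that interior gives a surjection onto `[0,1]`. Otherwise
a Urysohn function separating two points omits a value in between, so clopen sets separate
points and, the space being crowded, every nonempty clopen set splits into two nonempty clopen
pieces. If every decreasing sequence of nonempty clopen sets has nonempty intersection, iterated
splitting maps the space continuously onto the Cantor space `ℕ → Bool`, which binary expansion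
maps onto `[0,1]`. Otherwise a decreasing sequence of nonempty clopen sets `Cₙ` with empty
intersection gives the continuous map `x ↦ min {n | x ∉ Cₙ}`, whose range is infinite and can be
reindexed onto `ℕ`.
-/

open Set Function Topology

section

variable {X : Type*}

section

variable [TopologicalSpace X]

lemma exists_continuous_surjective_unitInterval_of_Icc_subset_range {f : X → ℝ}
    (hf : Continuous f) {a b : ℝ} (hab : a < b) (hsub : Icc a b ⊆ range f) :
    ∃ g : X → unitInterval, Continuous g ∧ Surjective g := by
  refine ⟨fun x => iccHomeoI a b hab (projIcc a b hab.le (f x)),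
    (iccHomeoI a b hab).continuous.comp (continuous_projIcc.comp hf),
    (iccHomeoI a b hab).surjective.comp ?_⟩
  rintro ⟨t, ht⟩
  obtain ⟨x, rfl⟩ := hsub ht
  exact ⟨x, projIcc_of_mem _ ht⟩

lemma exists_continuous_surjective_unitInterval_of_interior_range_nonempty {f : X → ℝ}
    (hf : Continuous f) (h : (interior (range f)).Nonempty) :
    ∃ g : X → unitInterval, Continuous g ∧ Surjective g := by
  obtain ⟨c, hc⟩ := h
  obtain ⟨u, hcu, hsub⟩ :=
    mem_nhdsGE_iff_exists_Icc_subset.1 (nhdsWithin_le_nhds (isOpen_interior.mem_nhds hc))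
  exact exists_continuous_surjective_unitInterval_of_Icc_subset_range hf hcu
    (hsub.trans interior_subset)

lemma exists_continuous_surjective_nat_of_infinite_range {f : X → ℕ} (hf : Continuous f)
    (h : (range f).Infinite) : ∃ g : X → ℕ, Continuous g ∧ Surjective g := by
  classical
  refine ⟨Nat.count (· ∈ range f) ∘ f, continuous_of_discreteTopology.comp hf,
    fun k => ?_⟩
  obtain ⟨x, hx⟩ := Nat.nth_mem_of_infinite h k
  exact ⟨x, by rw [comp_apply, hx]; exact Nat.count_nth_of_infinite h k⟩

lemma exists_continuous_surjective_nat_of_antitone_isClopen {C : ℕ → Set X}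
    (hC : ∀ n, IsClopen (C n)) (hne : ∀ n, (C n).Nonempty) (hanti : Antitone C)
    (hempty : ⋂ n, C n = ∅) : ∃ g : X → ℕ, Continuous g ∧ Surjective g := by
  classical
  have hexit : ∀ x, ∃ n, x ∉ C n := by
    simpa [eq_empty_iff_forall_notMem] using hempty
  let f x := Nat.find (hexit x)
  have hf : Continuous f := by
    refine continuous_discrete_rng.2 fun k => ?_
    have : f ⁻¹' {k} = (C k)ᶜ ∩ ⋂ j ∈ Iio k, C j := by
      ext x
      simp [f, Nat.find_eq_iff]
    rw [this]
    exact (hC k).isClosed.isOpen_compl.inter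
      ((finite_Iio k).isOpen_biInter fun j _ => (hC j).isOpen)
  refine exists_continuous_surjective_nat_of_infinite_range hf (infinite_of_not_bddAbove ?_)
  rintro ⟨b, hb⟩
  obtain ⟨x, hx⟩ := hne (b + 1)
  have hbx : b + 1 ≤ f x := (Nat.le_find_iff _ _).2 fun j hj => not_not.2 (hanti (by omega) hx)
  exact absurd (hb (mem_range_self x)) (by omega)

lemma isClopen_preimage_Iio_of_notMem_range {α : Type*} [LinearOrder α] [TopologicalSpace α]
    [OrderClosedTopology α] {f : X → α} (hf : Continuous f) {c : α} (hc : c ∉ range f) :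
    IsClopen (f ⁻¹' Iio c) := by
  refine ⟨?_, isOpen_Iio.preimage hf⟩
  have : f ⁻¹' Iio c = f ⁻¹' Iic c := by
    ext x
    exact ⟨le_of_lt, fun h => h.lt_of_ne fun hx => hc ⟨x, hx⟩⟩
  rw [this]
  exact isClosed_Iic.preimage hf

lemma exists_isClopen_mem_notMem_of_interior_range_eq_empty [CompletelyRegularSpace X]
    [T1Space X] (h : ∀ f : X → ℝ, Continuous f → interior (range f) = ∅) {x y : X}
    (hxy : x ≠ y) : ∃ U, IsClopen U ∧ x ∈ U ∧ y ∉ U := by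
  obtain ⟨f, hf, hfx, hfy⟩ :=
    CompletelyRegularSpace.completely_regular x {y} isClosed_singleton hxy
  let F : X → ℝ := fun z => f z
  have hF : Continuous F := continuous_subtype_val.comp hf
  obtain ⟨c, hc, hcF⟩ : ∃ c ∈ Ioo (0 : ℝ) 1, c ∉ range F := by
    by_contra! hsub
    have := interior_maximal hsub isOpen_Ioo
    rw [h F hF] at this
    exact this (show (1 / 2 : ℝ) ∈ Ioo 0 1 by norm_num)
  refine ⟨F ⁻¹' Iio c, isClopen_preimage_Iio_of_notMem_range hF hcF, ?_, ?_⟩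
  · simpa [F, hfx] using hc.1
  · simpa [F, hfy rfl] using hc.2.le

lemma IsClopen.exists_isClopen_inter_nonempty_diff_nonempty
    (crowded : ∀ x : X, ¬ IsOpen ({x} : Set X))
    (hsep : ∀ x y : X, x ≠ y → ∃ U, IsClopen U ∧ x ∈ U ∧ y ∉ U) {C : Set X} (hC : IsClopen C)
    (hne : C.Nonempty) : ∃ U, IsClopen U ∧ (C ∩ U).Nonempty ∧ (C \ U).Nonempty := by
  obtain ⟨x, hx⟩ := hne
  obtain ⟨y, hy, hyx⟩ : ∃ y ∈ C, y ≠ x := by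
    by_contra! h
    exact crowded x (eq_singleton_iff_unique_mem.2 ⟨hx, h⟩ ▸ hC.isOpen)
  obtain ⟨U, hU, hxU, hyU⟩ := hsep x y hyx.symm
  exact ⟨U, hU, ⟨x, hx, hxU⟩, ⟨y, hy, hyU⟩⟩

end

namespace ClopenSplitting

variable (σ : Set X → Set X)

def cell (d : ℕ → Bool) : ℕ → Set X
  | 0 => univ
  | n + 1 => if d n then cell d n ∩ σ (cell d n) else cell d n \ σ (cell d n)

/-- Equal to `cell σ (itinerary σ x)` (`cellOf_eq_cell`), but needed first to define the
itinerary. -/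
def cellOf (x : X) : ℕ → Set X
  | 0 => univ
  | n + 1 => cellOf x n ∩ {y | y ∈ σ (cellOf x n) ↔ x ∈ σ (cellOf x n)}

open Classical in
noncomputable def itinerary (x : X) (n : ℕ) : Bool := decide (x ∈ σ (cellOf σ x n))

lemma mem_cell_succ {d : ℕ → Bool} {n : ℕ} {y : X} :
    y ∈ cell σ d (n + 1) ↔ y ∈ cell σ d n ∧ (y ∈ σ (cell σ d n) ↔ d n) := by
  cases h : d n <;> simp [cell, h]

lemma cell_succ_subset (d : ℕ → Bool) (n : ℕ) : cell σ d (n + 1) ⊆ cell σ d n :=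
  fun _ hy => ((mem_cell_succ σ).1 hy).1

lemma cell_congr {d d' : ℕ → Bool} {n : ℕ} (h : ∀ k < n, d k = d' k) :
    cell σ d n = cell σ d' n := by
  induction n with
  | zero => rfl
  | succ n ih => simp only [cell, ih fun k hk => h k (by omega), h n n.lt_succ_self]

lemma cellOf_eq_cell (x : X) (n : ℕ) : cellOf σ x n = cell σ (itinerary σ x) n := by
  induction n with
  | zero => rfl
  | succ n ih =>
    ext y
    rw [mem_cell_succ, ← ih]
    simp [cellOf, itinerary]

lemma mem_cell_itinerary (x : X) (n : ℕ) : x ∈ cell σ (itinerary σ x) n := by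
  rw [← cellOf_eq_cell]
  induction n with
  | zero => trivial
  | succ n ih => exact ⟨ih, Iff.rfl⟩

lemma itinerary_eq_of_mem_cell {d : ℕ → Bool} {n : ℕ} {y : X} (hy : y ∈ cell σ d n) {k : ℕ}
    (hk : k < n) : itinerary σ y k = d k := by
  induction n generalizing k with
  | zero => omega
  | succ n ih =>
    rw [mem_cell_succ] at hy
    rcases Nat.lt_succ_iff_lt_or_eq.1 hk with hk | rfl
    · exact ih hy.1 hk
    · have : cellOf σ y k = cell σ d k :=
        (cellOf_eq_cell σ y k).trans (cell_congr σ fun j hj => ih hy.1 hj)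
      simp [itinerary, this, hy.2]

variable [TopologicalSpace X] {σ}

def IsSplitting (σ : Set X → Set X) : Prop :=
  ∀ C, IsClopen C → C.Nonempty → IsClopen (σ C) ∧ (C ∩ σ C).Nonempty ∧ (C \ σ C).Nonempty

lemma isClopen_cell_and_nonempty [Nonempty X] (hσ : IsSplitting σ) (d : ℕ → Bool) (n : ℕ) :
    IsClopen (cell σ d n) ∧ (cell σ d n).Nonempty := by
  induction n with
  | zero => exact ⟨isClopen_univ, univ_nonempty⟩
  | succ n ih =>
    obtain ⟨hσC, hinter_ne, hdiff_ne⟩ := hσ _ ih.1 ih.2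
    rw [cell]
    split_ifs
    · exact ⟨ih.1.inter hσC, hinter_ne⟩
    · exact ⟨ih.1.diff hσC, hdiff_ne⟩

lemma continuous_itinerary [Nonempty X] (hσ : IsSplitting σ) : Continuous (itinerary σ) :=
  continuous_pi fun k => IsLocallyConstant.continuous <|
    (IsLocallyConstant.iff_exists_open _).2 fun x =>
      ⟨cell σ (itinerary σ x) (k + 1), (isClopen_cell_and_nonempty hσ _ _).1.isOpen,
        mem_cell_itinerary σ x _, fun _ hy => itinerary_eq_of_mem_cell σ hy k.lt_succ_self⟩

lemma surjective_itinerary [Nonempty X] (hσ : IsSplitting σ)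
    (hinter : ∀ C : ℕ → Set X, (∀ n, IsClopen (C n)) → (∀ n, (C n).Nonempty) → Antitone C →
      (⋂ n, C n).Nonempty) : Surjective (itinerary σ) := by
  intro d
  obtain ⟨x, hx⟩ := hinter (cell σ d) (fun n => (isClopen_cell_and_nonempty hσ d n).1)
    (fun n => (isClopen_cell_and_nonempty hσ d n).2)
    (antitone_nat_of_succ_le (cell_succ_subset σ d))
  exact ⟨x, funext fun k => itinerary_eq_of_mem_cell σ (mem_iInter.1 hx (k + 1)) k.lt_succ_self⟩

end ClopenSplitting

variable [TopologicalSpace X]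

theorem exists_continuous_surjective_cantor_of_isClopen_split [Nonempty X]
    (hsplit : ∀ C : Set X, IsClopen C → C.Nonempty →
      ∃ U, IsClopen U ∧ (C ∩ U).Nonempty ∧ (C \ U).Nonempty)
    (hinter : ∀ C : ℕ → Set X, (∀ n, IsClopen (C n)) → (∀ n, (C n).Nonempty) → Antitone C →
      (⋂ n, C n).Nonempty) :
    ∃ f : X → (ℕ → Bool), Continuous f ∧ Surjective f := by
  choose! σ hσ using hsplit
  exact ⟨ClopenSplitting.itinerary σ, ClopenSplitting.continuous_itinerary hσ,
    ClopenSplitting.surjective_itinerary hσ hinter⟩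

end

/-- Every infinite crowded Tychonoff space admits a continuous surjection onto
either the discrete space `ℕ` or the closed unit interval `[0,1]`. -/
theorem stmt_0 (X : Type*) [TopologicalSpace X] [T35Space X] [Infinite X]
    (crowded : ∀ x : X, ¬ IsOpen ({x} : Set X)) :
    (∃ f : X → ℕ, Continuous f ∧ Function.Surjective f) ∨
    (∃ g : X → unitInterval, Continuous g ∧ Function.Surjective g) := by
  by_cases hinterior : ∃ f : X → ℝ, Continuous f ∧ (interior (range f)).Nonempty
  · obtain ⟨f, hf, h⟩ := hinterior
    exact .inr (exists_continuous_surjective_unitInterval_of_interior_range_nonempty hf h)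
  push Not at hinterior
  by_cases hinter : ∀ C : ℕ → Set X, (∀ n, IsClopen (C n)) → (∀ n, (C n).Nonempty) →
      Antitone C → (⋂ n, C n).Nonempty
  · have hsplit (C : Set X) (hC : IsClopen C) (hne : C.Nonempty) :=
      hC.exists_isClopen_inter_nonempty_diff_nonempty crowded
        (fun _ _ => exists_isClopen_mem_notMem_of_interior_range_eq_empty hinterior) hne
    obtain ⟨f, hf, hsurj⟩ := exists_continuous_surjective_cantor_of_isClopen_split hsplit hinter
    exact .inr ⟨Real.fromBinary ∘ f, Real.fromBinary_continuous.comp hf,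
      Real.fromBinary_surjective.comp hsurj⟩
  push Not at hinter
  obtain ⟨C, hC, hne, hanti, hempty⟩ := hinter
  exact .inl (exists_continuous_surjective_nat_of_antitone_isClopen hC hne hanti hempty)
end

section
/- A zero-dimensional separable metrizable space that contains a closed copy of ℕ (an infinite closed discrete subset) retracts onto that copy; consequently a noncompact zero-dimensional subset of ℝ maps continuously onto the discrete space ℕ. -/
/-! Cover `X` by clopen sets each meeting the closed discrete set `D` in at most one point. By the
Lindelöf property countably many of them, `C₀, C₁, …`, suffice, and `x ↦ min {n | x ∈ Cₙ}` is
locally constant; sending `x` to the point of `D` in the chosen `Cₙ` (or to a fixed point of `D`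
if there is none) is the retraction. A noncompact Lindelöf T₁ space is not countably compact, so
it contains an infinite closed discrete set `D`; the retraction onto `D` followed by a surjection
`D → ℕ` maps it continuously onto `ℕ`. Subspaces of `ℝ` are Lindelöf. -/

/-- A space is zero-dimensional if it has a base of clopen sets. -/
def HasClopenBasis (X : Type*) [TopologicalSpace X] : Prop :=
  ∃ B : Set (Set X), TopologicalSpace.IsTopologicalBasis B ∧ ∀ U ∈ B, IsClopen U

open Set Filter Topology Function

section ZeroDimensional

variable {X : Type*} [TopologicalSpace X]

theorem IsClosed.exists_mem_nhds_inter_subset_singleton {D : Set X} (hDc : IsClosed D)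
    (hDd : IsDiscrete D) (x : X) : ∃ U ∈ 𝓝 x, U ∩ D ⊆ {x} := by
  have hx := isClosed_and_discrete_iff.1 ⟨hDc, hDd⟩ x
  rw [disjoint_principal_right, mem_nhdsWithin_iff_exists_mem_nhds_inter] at hx
  obtain ⟨U, hU, hUD⟩ := hx
  exact ⟨U, hU, fun y hy => by_contra fun hyx => hUD ⟨hy.1, hyx⟩ hy.2⟩

theorem HasClopenBasis.exists_isClopen_inter_subsingleton (hX : HasClopenBasis X) {D : Set X}
    (hDc : IsClosed D) (hDd : IsDiscrete D) (x : X) :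
    ∃ C, IsClopen C ∧ x ∈ C ∧ (C ∩ D).Subsingleton := by
  obtain ⟨B, hB, hBc⟩ := hX
  obtain ⟨U, hU, hUD⟩ := hDc.exists_mem_nhds_inter_subset_singleton hDd x
  obtain ⟨C, hCB, hxC, hCU⟩ := hB.mem_nhds_iff.1 hU
  exact ⟨C, hBc C hCB, hxC,
    subsingleton_singleton.anti ((inter_subset_inter_left D hCU).trans hUD)⟩

open scoped Classical in
theorem continuous_nat_find_of_isClopen {W : ℕ → Set X} (hW : ∀ n, IsClopen (W n))
    (hcover : ∀ x, ∃ n, x ∈ W n) : Continuous fun x => Nat.find (hcover x) := by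
  refine (IsLocallyConstant.iff_isOpen_fiber.2 fun n => ?_).continuous
  have hfiber : (fun x => Nat.find (hcover x)) ⁻¹' {n} = W n ∩ ⋂ j ∈ Iio n, (W j)ᶜ := by
    ext x
    simp [Nat.find_eq_iff]
  rw [hfiber]
  exact (hW n).isOpen.inter <| (finite_Iio n).isOpen_biInter fun j _ => (hW j).compl.isOpen

theorem exists_continuous_nat_index_of_isClopen_cover [LindelofSpace X] [Nonempty X]
    {C : X → Set X} (hC : ∀ x, IsClopen (C x)) (hmem : ∀ x, x ∈ C x) :
    ∃ (c : ℕ → X) (φ : X → ℕ), Continuous φ ∧ ∀ x, x ∈ C (c (φ x)) := by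
  classical
  obtain ⟨c, hc⟩ := isLindelof_univ.indexed_countable_subcover C (fun x => (hC x).isOpen)
    fun x _ => mem_iUnion.2 ⟨x, hmem x⟩
  have hcover : ∀ x, ∃ n, x ∈ C (c n) := fun x => mem_iUnion.1 (hc (mem_univ x))
  exact ⟨c, _, continuous_nat_find_of_isClopen (fun n => hC (c n)) hcover,
    fun x => Nat.find_spec (hcover x)⟩

theorem HasClopenBasis.exists_retraction [LindelofSpace X] (hX : HasClopenBasis X) {D : Set X}
    (hDc : IsClosed D) (hDd : IsDiscrete D) (hD : D.Nonempty) :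
    ∃ r : X → D, Continuous r ∧ ∀ d : D, r d = d := by
  choose C hC hmem hCD using hX.exists_isClopen_inter_subsingleton hDc hDd
  have : Nonempty X := hD.to_subtype.map Subtype.val
  obtain ⟨c, φ, hφ, hφC⟩ := exists_continuous_nat_index_of_isClopen_cover hC hmem
  have hρ : ∀ n, ∃ d : D, (C (c n) ∩ D).Nonempty → (d : X) ∈ C (c n) := by
    intro n
    by_cases h : (C (c n) ∩ D).Nonempty
    · exact ⟨⟨h.some, h.some_mem.2⟩, fun _ => h.some_mem.1⟩
    · exact ⟨⟨hD.some, hD.some_mem⟩, fun h' => absurd h' h⟩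
  choose ρ hρ using hρ
  refine ⟨ρ ∘ φ, continuous_of_discreteTopology.comp hφ, fun d => Subtype.ext ?_⟩
  have hd : (d : X) ∈ C (c (φ d)) ∩ D := ⟨hφC d, d.2⟩
  exact hCD _ ⟨hρ _ ⟨d, hd⟩, (ρ (φ d)).2⟩ hd

theorem exists_infinite_isClosed_isDiscrete_of_not_countablyCompactSpace [T1Space X]
    (h : ¬ CountablyCompactSpace X) :
    ∃ D : Set X, D.Infinite ∧ IsClosed D ∧ IsDiscrete D := by
  rw [← isCountablyCompact_univ_iff, isCountablyCompact_iff_infinite_subset_has_accPt] at h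
  push Not at h
  obtain ⟨D, -, hD, hacc⟩ := h
  refine ⟨D, hD, isClosed_and_discrete_iff.2 fun x => ?_⟩
  exact disjoint_iff.2 (not_neBot.1 (hacc x (mem_univ x)))

theorem HasClopenBasis.exists_continuous_surjective_nat [LindelofSpace X] [T1Space X]
    (hX : HasClopenBasis X) (h : ¬ CompactSpace X) :
    ∃ g : X → ℕ, Continuous g ∧ Surjective g := by
  have hncc : ¬ CountablyCompactSpace X := fun _ => h LindelofSpace.compactSpace
  obtain ⟨D, hDi, hDc, hDd⟩ :=
    exists_infinite_isClosed_isDiscrete_of_not_countablyCompactSpace hncc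
  obtain ⟨r, hr, hrD⟩ := hX.exists_retraction hDc hDd hDi.nonempty
  have := hDd.to_subtype
  have := hDi.to_subtype
  exact ⟨invFun (Infinite.natEmbedding D) ∘ r, continuous_of_discreteTopology.comp hr,
    (invFun_surjective (Infinite.natEmbedding D).injective).comp fun d => ⟨d, hrD d⟩⟩

end ZeroDimensional

/-- (1) A zero-dimensional separable metrizable space retracts onto any infinite
countable closed discrete subset (a closed copy of `ℕ`);
(2) consequently, a noncompact zero-dimensional subset of `ℝ` maps continuously
onto the discrete space `ℕ`. -/
theorem stmt_2 :
    (∀ (X : Type) [TopologicalSpace X] [TopologicalSpace.SeparableSpace X]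
      [TopologicalSpace.MetrizableSpace X], HasClopenBasis X →
      ∀ D : Set X, D.Infinite → D.Countable → IsClosed D → DiscreteTopology D →
        ∃ r : X → D, Continuous r ∧ ∀ d : D, r d = d) ∧
    (∀ S : Set ℝ, HasClopenBasis S → ¬ IsCompact S →
      ∃ g : S → ℕ, Continuous g ∧ Function.Surjective g) := by
  refine ⟨fun X _ _ _ hX D hDi _ hDc hDd => ?_, fun S hS hSc => ?_⟩
  · -- a compatible metric makes the separable space second countable, hence Lindelöf
    let := TopologicalSpace.pseudoMetrizableSpacePseudoMetric X
    exact hX.exists_retraction hDc ⟨hDd⟩ hDi.nonempty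
  · exact hS.exists_continuous_surjective_nat (isCompact_iff_compactSpace.not.1 hSc)
end

section
/- Every continuous image of the ordinal space ω₁ (all countable ordinals with the order topology) of countable weight is compact and countable; hence any such infinite image has an isolated point and is not homogeneous. -/
/-- The space `ω₁` of all countable ordinals, with the (order) topology inherited
from the ordinals. -/
def Omega1 : Type 1 := {o : Ordinal.{0} // o < (Cardinal.aleph 1).ord}

instance : TopologicalSpace Omega1 := instTopologicalSpaceSubtype

/-- The weight of a topological space: the minimal cardinality of a base. -/
noncomputable def weight (Y : Type*) [TopologicalSpace Y] : Cardinal :=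
  sInf {κ | ∃ B : Set (Set Y), TopologicalSpace.IsTopologicalBasis B ∧ Cardinal.mk B = κ}

/-- A space is homogeneous if its homeomorphism group acts transitively. -/
def IsHomogeneous (Y : Type*) [TopologicalSpace Y] : Prop :=
  ∀ x y : Y, ∃ h : Y ≃ₜ Y, h x = y

/-!
A regular space of countable weight is second countable, hence metrizable. A continuous map
from `ω₁` to a metric space is eventually constant: otherwise some `ε` admits an increasing
`ω`-sequence along which the map jumps by at least `ε`, and since `ω₁` is closed under countable
suprema the sequence converges in `ω₁`, contradicting continuity at its limit. So `Y` is the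
image of a compact countable initial segment `[0, s]`. A nonempty countable compact Hausdorff
space is Baire, so some singleton has nonempty interior; were `Y` homogeneous, every point would
be isolated and the infinite compact space `Y` would be discrete.
-/

open Set Filter Topology Cardinal

theorem secondCountableTopology_of_weight_le_aleph0 {Y : Type*} [TopologicalSpace Y]
    (hw : weight Y ≤ ℵ₀) : SecondCountableTopology Y := by
  obtain ⟨B, hB, hcard⟩ : weight Y ∈
      {κ | ∃ B : Set (Set Y), TopologicalSpace.IsTopologicalBasis B ∧ #B = κ} :=
    csInf_mem ⟨_, _, TopologicalSpace.isTopologicalBasis_opens, rfl⟩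
  exact hB.secondCountableTopology (le_aleph0_iff_set_countable.mp (hcard ▸ hw))

theorem IsHomogeneous.discreteTopology {Y : Type*} [TopologicalSpace Y] (hY : IsHomogeneous Y)
    {y : Y} (hy : IsOpen ({y} : Set Y)) : DiscreteTopology Y := by
  refine discreteTopology_iff_isOpen_singleton.mpr fun z => ?_
  obtain ⟨h, rfl⟩ := hY y z
  simpa using h.isOpenMap _ hy

theorem exists_isOpen_singleton_of_countable (Y : Type*) [TopologicalSpace Y] [T1Space Y]
    [BaireSpace Y] [Countable Y] [Nonempty Y] : ∃ y : Y, IsOpen ({y} : Set Y) := by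
  obtain ⟨y, hy⟩ := nonempty_interior_of_iUnion_of_closed (f := fun y : Y => ({y} : Set Y))
    (fun _ => isClosed_singleton) (iUnion_of_singleton Y)
  exact ⟨y, hy.subset_singleton_iff.mp interior_subset ▸ isOpen_interior⟩

namespace Omega1

noncomputable instance : LinearOrder Omega1 :=
  inferInstanceAs (LinearOrder {o : Ordinal.{0} // o < (aleph 1).ord})

instance : Nonempty Omega1 :=
  ⟨⟨0, ord_pos.mpr (aleph_pos 1)⟩⟩

theorem isEmbedding_val : Topology.IsEmbedding (X := Omega1) Subtype.val :=
  Topology.IsEmbedding.subtypeVal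

noncomputable def seqSup (β : ℕ → Omega1) : Omega1 :=
  ⟨⨆ k, (β k).1, Ordinal.iSup_lt_of_lt_cof (by
    rw [isRegular_aleph_one.cof_ord, mk_nat]; exact aleph0_lt_aleph_one) fun k => (β k).2⟩

theorem le_seqSup (β : ℕ → Omega1) (k : ℕ) : β k ≤ seqSup β :=
  le_ciSup (f := fun k => (β k).1) Ordinal.bddAbove_of_small k

theorem tendsto_seqSup {β : ℕ → Omega1} (hβ : Monotone β) : Tendsto β atTop (𝓝 (seqSup β)) :=
  isEmbedding_val.isInducing.tendsto_nhds_iff.mpr <|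
    tendsto_atTop_ciSup (fun _ _ h => hβ h) Ordinal.bddAbove_of_small

theorem isCompact_Iic (s : Omega1) : IsCompact (Iic s) := by
  refine isEmbedding_val.isCompact_iff.mpr ?_
  convert (isCompact_Icc : IsCompact (Icc ⊥ s.1)) using 1
  ext o
  constructor
  · rintro ⟨x, hx, rfl⟩
    exact ⟨bot_le, hx⟩
  · rintro ⟨-, ho⟩
    exact ⟨⟨o, ho.trans_lt s.2⟩, ho, rfl⟩

theorem countable_Iic (s : Omega1) : (Iic s).Countable := by
  have hIio : (Iio s.1).Countable := by
    rw [← le_aleph0_iff_set_countable, mk_Iio_ordinal, lift_le_aleph0, ← lt_aleph_one_iff,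
      ← lt_ord]
    exact s.2
  refine ((hIio.insert s.1).preimage Subtype.val_injective).mono fun x hx => ?_
  show x.1 ∈ insert s.1 (Iio s.1)
  rw [Iio_insert]
  exact hx

theorem exists_forall_ge_dist_lt {Y : Type*} [PseudoMetricSpace Y] {g : Omega1 → Y}
    (hg : Continuous g) {ε : ℝ} (hε : 0 < ε) :
    ∃ b, ∀ γ, b ≤ γ → dist (g γ) (g b) < ε := by
  by_contra! hcon
  choose F hF hdist using hcon
  let β : ℕ → Omega1 := fun n => F^[n] (Classical.arbitrary _)
  have hβ : Monotone β := monotone_nat_of_le_succ fun n => by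
    simp only [β, Function.iterate_succ_apply']
    exact hF _
  have hlim := (hg.tendsto _).comp (tendsto_seqSup hβ)
  have hsucc := (hlim.comp (tendsto_add_atTop_nat 1)).dist hlim
  rw [dist_self] at hsucc
  refine hε.not_ge (ge_of_tendsto' hsucc fun n => ?_)
  simp only [Function.comp_apply, β, Function.iterate_succ_apply']
  exact hdist _

theorem exists_forall_ge_eq {Y : Type*} [TopologicalSpace Y] [TopologicalSpace.MetrizableSpace Y]
    {g : Omega1 → Y} (hg : Continuous g) : ∃ s, ∀ γ, s ≤ γ → g γ = g s := by
  let := TopologicalSpace.metrizableSpaceMetric Y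
  choose b hb using fun n : ℕ => exists_forall_ge_dist_lt hg (Nat.one_div_pos_of_nat (n := n))
  refine ⟨seqSup b, fun γ hγ => eq_of_forall_dist_le fun ε hε => ?_⟩
  obtain ⟨n, hn⟩ := exists_nat_one_div_lt (half_pos hε)
  calc dist (g γ) (g (seqSup b)) ≤ dist (g γ) (g (b n)) + dist (g (seqSup b)) (g (b n)) :=
        dist_triangle_right _ _ _
    _ ≤ ε / 2 + ε / 2 := by
        gcongr
        · exact ((hb n γ ((le_seqSup b n).trans hγ)).trans hn).le
        · exact ((hb n _ (le_seqSup b n)).trans hn).le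
    _ = ε := add_halves ε

end Omega1

/-- Every continuous Tychonoff image of `ω₁` of countable weight is compact and
countable; hence if infinite it has an isolated point and is not homogeneous. -/
theorem stmt_8 (Y : Type*) [TopologicalSpace Y] [T35Space Y]
    (g : Omega1 → Y) (hg : Continuous g) (hsurj : Function.Surjective g)
    (hw : weight Y ≤ Cardinal.aleph0) :
    CompactSpace Y ∧ Countable Y ∧
      (Infinite Y → (∃ y : Y, IsOpen ({y} : Set Y)) ∧ ¬ IsHomogeneous Y) := by
  have := secondCountableTopology_of_weight_le_aleph0 hw
  obtain ⟨s, hs⟩ := Omega1.exists_forall_ge_eq hg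
  have hrange : g '' Iic s = Set.univ := eq_univ_of_forall fun y => by
    obtain ⟨x, rfl⟩ := hsurj y
    rcases le_total x s with h | h
    · exact ⟨x, h, rfl⟩
    · exact ⟨s, self_mem_Iic, (hs x h).symm⟩
  have : CompactSpace Y := ⟨hrange ▸ (Omega1.isCompact_Iic s).image hg⟩
  have : Countable Y := countable_univ_iff.mp (hrange ▸ (Omega1.countable_Iic s).image g)
  refine ⟨‹_›, ‹_›, fun hinf => ?_⟩
  obtain ⟨y, hy⟩ := exists_isOpen_singleton_of_countable Y
  refine ⟨⟨y, hy⟩, fun hhom => ?_⟩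
  have := hhom.discreteTopology hy
  exact not_finite_iff_infinite.mpr hinf finite_of_compact_of_discrete
end

section
/- Let 𝒜 be an almost disjoint family on ω and let X be the space obtained from the Ψ-space Ψ(𝒜) = ω ∪ 𝒜 by replacing each point n ∈ ω with a copy {n} × K of the Cantor set K = {0,1}^ℕ. Then X is zero-dimensional, locally compact, and homogeneous. -/
open Set

/-- An almost disjoint family on `ω`: an infinite family of infinite subsets of `ℕ`
with pairwise finite intersections. -/
def AlmostDisjointFamily (𝒜 : Set (Set ℕ)) : Prop :=
  𝒜.Infinite ∧ (∀ A ∈ 𝒜, A.Infinite) ∧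
    ∀ A ∈ 𝒜, ∀ B ∈ 𝒜, A ≠ B → (A ∩ B).Finite

/-- The Cantor set `{0,1}^ℕ`. -/
abbrev CantorK : Type := ℕ → Bool

/-- The underlying set of the Ψ-space `Ψ(𝒜) = ω ∪ 𝒜`. -/
def PsiSpace (𝒜 : Set (Set ℕ)) : Type := ℕ ⊕ ↥𝒜

/-- The Ψ-space topology: points of `ω` are isolated and the sets
`{A} ∪ {m ∈ A : m ≥ n}` form a neighborhood base at `A ∈ 𝒜`. -/
instance PsiSpace.topology (𝒜 : Set (Set ℕ)) : TopologicalSpace (PsiSpace 𝒜) :=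
  TopologicalSpace.generateFrom
    ({s | ∃ n : ℕ, s = {Sum.inl n}} ∪
     {s | ∃ (A : ↥𝒜) (n : ℕ),
        s = insert (Sum.inr A) (Sum.inl '' {m | m ∈ (A : Set ℕ) ∧ n ≤ m})})

/-- The underlying set of the space `X` obtained from `Ψ(𝒜)` by replacing each
point `n ∈ ω` by a copy `{n} × K` of the Cantor set. -/
def PsiX (𝒜 : Set (Set ℕ)) : Type := (ℕ × CantorK) ⊕ ↥𝒜

/-- The topology of `X`: basic open sets are the sets `{n} × C` with `C` open in the
Cantor set, and the sets `U_n(A) = {A} ∪ ⋃ {{m} × K : m ∈ A, m ≥ n}`. -/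
instance PsiX.topology (𝒜 : Set (Set ℕ)) : TopologicalSpace (PsiX 𝒜) :=
  TopologicalSpace.generateFrom
    ({s | ∃ (n : ℕ) (C : Set CantorK), IsOpen C ∧
        s = Sum.inl '' ({n} ×ˢ C)} ∪
     {s | ∃ (A : ↥𝒜) (n : ℕ),
        s = insert (Sum.inr A)
          (Sum.inl '' {p : ℕ × CantorK | p.1 ∈ (A : Set ℕ) ∧ n ≤ p.1})})

/-- The collapsing map `f : X → Ψ(𝒜)` sending each `{n} × K` to `n` and fixing `𝒜`. -/
def psiCollapse (𝒜 : Set (Set ℕ)) : PsiX 𝒜 → PsiSpace 𝒜 :=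
  Sum.map Prod.fst id


/-!
Every point has a neighbourhood base of compact open sets: the sets `{n} × C` near `(n, t)`, and
near `A` the sets `U_j(A)`, each the one-point compactification of its columns. Almost
disjointness makes `X` Hausdorff, so these compact open sets are also closed.

For homogeneity it suffices to exchange a point `(n, k)` with a point `A ∈ 𝒜`. Sorting the points
`t ≠ k` of `K` by the first index `a` at which `t` leaves `k` splits `K \ {k}` into clopen copies
of `K`, and `a → ∞` as `t → k`. Enumerating `A \ {n}` increasingly by `σ`, the involution sends
the `a`-th piece of `{n} × K` onto the column `{σ a} × K`, sends `(n, k)` to `A`, and fixes all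
other points; it is continuous at `B ≠ A` because `B ∩ A` is finite.
-/

open Filter Topology TopologicalSpace PiNat

namespace PiNat

variable {E : ℕ → Type*}

theorem firstDiff_eq_of {x y : ∀ n, E n} {a : ℕ} (h : ∀ i < a, x i = y i) (ha : x a ≠ y a) :
    firstDiff x y = a := by
  have hxy : x ≠ y := fun hxy => ha (congrFun hxy a)
  refine le_antisymm (not_lt.1 fun hlt => ha (apply_eq_of_lt_firstDiff hlt)) ?_
  exact (mem_cylinder_iff_le_firstDiff hxy a).1 h

variable [∀ n, TopologicalSpace (E n)] [∀ n, DiscreteTopology (E n)]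

theorem cylinder_mem_nhds (x : ∀ n, E n) (n : ℕ) : cylinder x n ∈ 𝓝 x :=
  (isOpen_cylinder E x n).mem_nhds (self_mem_cylinder x n)

theorem hasBasis_nhds_cylinder (x : ∀ n, E n) :
    (𝓝 x).HasBasis (fun _ => True) (cylinder x) := by
  refine ⟨fun V => ⟨fun hV => ?_, fun ⟨n, _, hn⟩ => mem_of_superset (cylinder_mem_nhds x n) hn⟩⟩
  obtain ⟨_, ⟨y, n, rfl⟩, hxy, hV⟩ := (isTopologicalBasis_cylinders E).mem_nhds_iff.1 hV
  exact ⟨n, trivial, (mem_cylinder_iff_eq.1 hxy).symm ▸ hV⟩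

end PiNat

namespace CantorK

def branchOff (k : CantorK) (a : ℕ) (s : CantorK) : CantorK :=
  fun i => if i < a then k i else if i = a then !k a else s (i - (a + 1))

def drop (a : ℕ) (t : CantorK) : CantorK := fun i => t (i + a)

variable {k t : CantorK} {a : ℕ}

theorem branchOff_mem_cylinder (s : CantorK) : branchOff k a s ∈ cylinder k a :=
  fun _ hi => if_pos hi

theorem firstDiff_branchOff (s : CantorK) : firstDiff (branchOff k a s) k = a :=
  firstDiff_eq_of (branchOff_mem_cylinder s) (by simp [branchOff])

theorem branchOff_ne (s : CantorK) : branchOff k a s ≠ k := fun h =>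
  absurd (congrFun h a) (by simp [branchOff])

theorem drop_branchOff (s : CantorK) : drop (a + 1) (branchOff k a s) = s := by
  funext i
  simp [drop, branchOff, show ¬i + (a + 1) < a by omega, show i + (a + 1) ≠ a by omega]

theorem branchOff_firstDiff_drop (h : t ≠ k) :
    branchOff k (firstDiff t k) (drop (firstDiff t k + 1) t) = t := by
  funext i
  rcases lt_trichotomy i (firstDiff t k) with hi | rfl | hi
  · simp [branchOff, hi, apply_eq_of_lt_firstDiff hi]
  · simpa [branchOff] using Bool.eq_not_iff.2 (apply_firstDiff_ne h).symm
  · simp [branchOff, drop, hi.ne', hi.not_gt, Nat.sub_add_cancel hi]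

theorem continuous_branchOff (k : CantorK) (a : ℕ) : Continuous (branchOff k a) :=
  continuous_pi fun _ => by
    unfold branchOff
    split_ifs
    exacts [continuous_const, continuous_const, continuous_apply _]

theorem continuous_drop (a : ℕ) : Continuous (drop a) :=
  continuous_pi fun i => continuous_apply (i + a)

theorem eventually_firstDiff_eq (h : t ≠ k) :
    ∀ᶠ s in 𝓝 t, s ≠ k ∧ firstDiff s k = firstDiff t k := by
  filter_upwards [cylinder_mem_nhds t (firstDiff t k + 1)] with s hs
  have hlt : ∀ i < firstDiff t k, s i = k i := fun i (hi : i < firstDiff t k) =>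
    (hs i (by omega)).trans (apply_eq_of_lt_firstDiff hi)
  have hne : s (firstDiff t k) ≠ k (firstDiff t k) :=
    hs (firstDiff t k) (by omega) ▸ apply_firstDiff_ne h
  exact ⟨fun hs => hne (congrFun hs _), firstDiff_eq_of hlt hne⟩

theorem tendsto_firstDiff (k : CantorK) :
    Tendsto (fun s => firstDiff s k) (𝓝[≠] k) atTop := by
  refine tendsto_atTop.2 fun N => ?_
  filter_upwards [nhdsWithin_le_nhds (cylinder_mem_nhds k N), self_mem_nhdsWithin] with s hs hne
  exact (mem_cylinder_iff_le_firstDiff hne N).1 hs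

theorem eventually_forall_branchOff_mem {V : Set CantorK} (hV : V ∈ 𝓝 k) :
    ∀ᶠ a in atTop, ∀ s, branchOff k a s ∈ V := by
  obtain ⟨N, -, hN⟩ := (hasBasis_nhds_cylinder k).mem_iff.1 hV
  filter_upwards [eventually_ge_atTop N] with a ha s
  exact hN (cylinder_anti k ha (branchOff_mem_cylinder s))

end CantorK

namespace PsiX

variable {𝒜 : Set (Set ℕ)}

-- `Sum.inl p` has type `_ ⊕ _`, not `PsiX 𝒜`; with these typed copies, membership in
-- `Set (PsiX 𝒜)` elaborates at the right type and the rewriting lemmas below apply.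
abbrev inl : ℕ × CantorK → PsiX 𝒜 := Sum.inl

abbrev inr : 𝒜 → PsiX 𝒜 := Sum.inr

theorem inl_injective : Function.Injective (inl : ℕ × CantorK → PsiX 𝒜) := Sum.inl_injective

@[simp]
theorem inl_inj {p q : ℕ × CantorK} : (inl p : PsiX 𝒜) = inl q ↔ p = q := Sum.inl.inj_iff

@[simp]
theorem inr_inj {A B : 𝒜} : inr A = inr B ↔ A = B := Sum.inr.inj_iff

def basicOpen (A : 𝒜) (j : ℕ) : Set (PsiX 𝒜) :=
  insert (inr A) (inl '' {p : ℕ × CantorK | p.1 ∈ (A : Set ℕ) ∧ j ≤ p.1})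

@[simp]
theorem inl_mem_basicOpen {p : ℕ × CantorK} {A : 𝒜} {j : ℕ} :
    inl p ∈ basicOpen A j ↔ p.1 ∈ (A : Set ℕ) ∧ j ≤ p.1 := by
  simp [basicOpen]

@[simp]
theorem inr_mem_basicOpen {A B : 𝒜} {j : ℕ} : inr B ∈ basicOpen A j ↔ B = A := by
  simp [basicOpen]

theorem basicOpen_anti (A : 𝒜) : Antitone (basicOpen A) := by
  rintro i j hij (p | B) h
  · simp only [inl_mem_basicOpen] at h ⊢
    exact ⟨h.1, hij.trans h.2⟩
  · simpa using h

theorem isOpen_basicOpen (A : 𝒜) (j : ℕ) : IsOpen (basicOpen A j) :=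
  GenerateOpen.basic _ (Or.inr ⟨A, j, rfl⟩)

theorem isOpen_iff {s : Set (PsiX 𝒜)} :
    IsOpen s ↔ IsOpen (inl ⁻¹' s) ∧ ∀ A, inr A ∈ s → ∃ j, basicOpen A j ⊆ s := by
  refine ⟨fun hs => ?_, fun ⟨hl, hr⟩ => isOpen_iff_forall_mem_open.2 ?_⟩
  · induction hs with
    | basic s hs =>
      rcases hs with ⟨n, C, hC, hs⟩ | ⟨A, j, hs⟩
      · obtain rfl : s = inl '' ({n} ×ˢ C) := hs
        refine ⟨?_, by simp⟩
        rw [preimage_image_eq _ inl_injective]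
        exact (isOpen_discrete _).prod hC
      · obtain rfl : s = basicOpen A j := hs
        refine ⟨?_, fun B hB => ⟨j, by simp_all⟩⟩
        have : inl ⁻¹' basicOpen A j = Prod.fst ⁻¹' {m | m ∈ (A : Set ℕ) ∧ j ≤ m} := by
          ext; simp
        rw [this]
        exact (isOpen_discrete _).preimage continuous_fst
    | univ => exact ⟨isOpen_univ, fun _ _ => ⟨0, subset_univ _⟩⟩
    | inter s t _ _ hs ht =>
      refine ⟨hs.1.inter ht.1, fun A hA => ?_⟩
      obtain ⟨i, hi⟩ := hs.2 A hA.1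
      obtain ⟨j, hj⟩ := ht.2 A hA.2
      exact ⟨max i j, subset_inter ((basicOpen_anti A (le_max_left i j)).trans hi)
        ((basicOpen_anti A (le_max_right i j)).trans hj)⟩
    | sUnion S _ hS =>
      refine ⟨?_, fun A ⟨t, ht, hA⟩ => ?_⟩
      · rw [preimage_sUnion]
        exact isOpen_biUnion fun t ht => (hS t ht).1
      · obtain ⟨j, hj⟩ := (hS t ht).2 A hA
        exact ⟨j, hj.trans (subset_sUnion_of_mem ht)⟩
  · rintro (⟨n, t⟩ | A) hx
    · refine ⟨inl '' ({n} ×ˢ (Prod.mk n ⁻¹' (inl ⁻¹' s))), ?_, ?_, ⟨(n, t), ⟨rfl, hx⟩, rfl⟩⟩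
      · rintro _ ⟨p, ⟨rfl, hp⟩, rfl⟩
        exact hp
      · exact GenerateOpen.basic _ (Or.inl ⟨n, _, hl.preimage (Continuous.prodMk_right n), rfl⟩)
    · obtain ⟨j, hj⟩ := hr A hx
      exact ⟨basicOpen A j, hj, isOpen_basicOpen A j, by simp⟩

theorem isOpenEmbedding_inl : IsOpenEmbedding (inl : ℕ × CantorK → PsiX 𝒜) := by
  refine .of_continuous_injective_isOpenMap
    (continuous_def.2 fun s hs => (isOpen_iff.1 hs).1) inl_injective fun W hW => ?_
  refine isOpen_iff.2 ⟨by rwa [preimage_image_eq _ inl_injective], fun A hA => ?_⟩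
  simp at hA

theorem nhds_inl (p : ℕ × CantorK) : 𝓝 (inl p : PsiX 𝒜) = map inl (𝓝 p) :=
  (isOpenEmbedding_inl.map_nhds_eq p).symm

theorem hasBasis_nhds_inr (A : 𝒜) : (𝓝 (inr A)).HasBasis (fun _ => True) (basicOpen A) := by
  refine ⟨fun s => ⟨fun hs => ?_, fun ⟨j, _, hj⟩ =>
    mem_of_superset ((isOpen_basicOpen A j).mem_nhds (by simp)) hj⟩⟩
  obtain ⟨t, hts, ht, hAt⟩ := mem_nhds_iff.1 hs
  obtain ⟨j, hj⟩ := (isOpen_iff.1 ht).2 A hAt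
  exact ⟨j, trivial, hj.trans hts⟩

theorem continuous_of_continuous_comp_inl {Y : Type*} [TopologicalSpace Y] {f : PsiX 𝒜 → Y}
    (hl : Continuous (f ∘ inl)) (hr : ∀ A, ContinuousAt f (inr A)) : Continuous f :=
  continuous_iff_continuousAt.2 <| Sum.forall.2
    ⟨fun _ => isOpenEmbedding_inl.continuousAt_iff.1 hl.continuousAt, hr⟩

theorem isCompact_basicOpen (A : 𝒜) (j : ℕ) : IsCompact (basicOpen A j) := by
  set D := {p : ℕ × CantorK | p.1 ∈ (A : Set ℕ) ∧ j ≤ p.1}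
  have hD : IsClosed D := (isClosed_discrete {m | m ∈ (A : Set ℕ) ∧ j ≤ m}).preimage continuous_fst
  rw [basicOpen, image_eq_range]
  refine Tendsto.isCompact_insert_range_of_cocompact ?_
    (isOpenEmbedding_inl.continuous.comp continuous_subtype_val)
  refine (hasBasis_nhds_inr A).tendsto_right_iff.2 fun i _ => mem_cocompact.2 ?_
  refine ⟨_, hD.isClosedEmbedding_subtypeVal.isCompact_preimage
    ((finite_Iio i).isCompact.prod isCompact_univ), fun p hp => ?_⟩
  simp only [mem_compl_iff, mem_preimage, mem_prod, mem_Iio, mem_univ, and_true, not_lt] at hp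
  simpa [hp] using p.2.1

instance : LocallyCompactSpace (PsiX 𝒜) := by
  refine ⟨Sum.forall.2 ⟨fun p U hU => ?_, fun A U hU => ?_⟩⟩
  · rw [nhds_inl, mem_map] at hU
    obtain ⟨K, hK, hKU, hKc⟩ := local_compact_nhds hU
    exact ⟨inl '' K, isOpenEmbedding_inl.isOpenMap.image_mem_nhds hK, image_subset_iff.2 hKU,
      hKc.image isOpenEmbedding_inl.continuous⟩
  · obtain ⟨j, -, hj⟩ := (hasBasis_nhds_inr A).mem_iff.1 hU
    exact ⟨basicOpen A j, (hasBasis_nhds_inr A).mem_of_mem trivial, hj, isCompact_basicOpen A j⟩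

theorem exists_disjoint_basicOpen (h𝒜 : 𝒜.Pairwise fun A B => (A ∩ B).Finite) {A B : 𝒜}
    (hAB : A ≠ B) : ∃ i, Disjoint (basicOpen A 0) (basicOpen B i) := by
  obtain ⟨N, hN⟩ := (h𝒜 A.2 B.2 (Subtype.coe_ne_coe.2 hAB)).bddAbove
  refine ⟨N + 1, disjoint_left.2 fun x hA hB => ?_⟩
  rcases x with p | C
  · simp only [inl_mem_basicOpen] at hA hB
    have := hN ⟨hA.1, hB.1⟩
    omega
  · simp only [inr_mem_basicOpen] at hA hB
    exact hAB (hA.symm.trans hB)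

theorem disjoint_nhds_inl_inr (p : ℕ × CantorK) (A : 𝒜) : Disjoint (𝓝 (inl p)) (𝓝 (inr A)) := by
  have hcol : inl '' ({p.1} ×ˢ univ) ∈ 𝓝 (inl p : PsiX 𝒜) :=
    isOpenEmbedding_inl.isOpenMap.image_mem_nhds
      (((isOpen_discrete _).prod isOpen_univ).mem_nhds ⟨rfl, trivial⟩)
  refine disjoint_of_disjoint_of_mem (disjoint_left.2 ?_) hcol
    ((hasBasis_nhds_inr A).mem_of_mem (i := p.1 + 1) trivial)
  rintro _ ⟨q, ⟨hq, -⟩, rfl⟩ hA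
  simp only [mem_singleton_iff] at hq
  simp only [inl_mem_basicOpen] at hA
  omega

theorem t2Space (h𝒜 : 𝒜.Pairwise fun A B => (A ∩ B).Finite) : T2Space (PsiX 𝒜) := by
  refine t2Space_iff_disjoint_nhds.2 ?_
  rintro (p | A) (q | B) hxy
  · rw [nhds_inl, nhds_inl, disjoint_map inl_injective]
    exact disjoint_nhds_nhds.2 fun h => hxy (congrArg inl h)
  · exact disjoint_nhds_inl_inr p B
  · exact (disjoint_nhds_inl_inr q A).symm
  · obtain ⟨i, hi⟩ := exists_disjoint_basicOpen h𝒜 fun h => hxy (congrArg inr h)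
    exact ((hasBasis_nhds_inr A).disjoint_iff (hasBasis_nhds_inr B)).2 ⟨0, trivial, i, trivial, hi⟩

theorem isTopologicalBasis_isClopen [T2Space (PsiX 𝒜)] :
    IsTopologicalBasis {s : Set (PsiX 𝒜) | IsClopen s} := by
  refine isTopologicalBasis_of_isOpen_of_nhds (fun _ h => h.2) ?_
  rintro (p | A) U hx hU
  · have hW : inl ⁻¹' U ∩ ({p.1} ×ˢ univ) ∈ 𝓝 p :=
      inter_mem (isOpenEmbedding_inl.continuous.continuousAt.preimage_mem_nhds (hU.mem_nhds hx))
        (((isOpen_discrete _).prod isOpen_univ).mem_nhds ⟨rfl, trivial⟩)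
    obtain ⟨W, hW, hpW, hWU⟩ := loc_compact_Haus_tot_disc_of_zero_dim.mem_nhds_iff.1 hW
    have hWc : IsCompact W := (isCompact_singleton.prod isCompact_univ).of_isClosed_subset
      hW.isClosed fun q hq => (hWU hq).2
    exact ⟨inl '' W, ⟨(hWc.image isOpenEmbedding_inl.continuous).isClosed,
      isOpenEmbedding_inl.isOpenMap W hW.isOpen⟩, mem_image_of_mem _ hpW,
      image_subset_iff.2 fun q hq => (hWU hq).1⟩
  · obtain ⟨j, -, hj⟩ := (hasBasis_nhds_inr A).mem_iff.1 (hU.mem_nhds hx)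
    exact ⟨basicOpen A j, ⟨(isCompact_basicOpen A j).isClosed, isOpen_basicOpen A j⟩, by simp, hj⟩

section Exchange

open CantorK

open scoped Classical in
noncomputable def exchange (A : 𝒜) (n : ℕ) (k : CantorK) (σ : ℕ ≃o ↥((A : Set ℕ) \ {n})) :
    PsiX 𝒜 → PsiX 𝒜
  | Sum.inl (m, t) =>
    if m = n then
      if t = k then inr A else inl (σ (firstDiff t k), drop (firstDiff t k + 1) t)
    else if hm : m ∈ (A : Set ℕ) \ {n} then inl (n, branchOff k (σ.symm ⟨m, hm⟩) t)
    else inl (m, t)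
  | Sum.inr B => if B = A then inl (n, k) else inr B

variable {A : 𝒜} {n : ℕ} {k : CantorK} {σ : ℕ ≃o ↥((A : Set ℕ) \ {n})}

theorem exchange_inr_self : exchange A n k σ (inr A) = inl (n, k) := by
  simp [exchange]

theorem exchange_inr_of_ne {B : 𝒜} (hB : B ≠ A) : exchange A n k σ (inr B) = inr B := by
  simp [exchange, hB]

theorem exchange_inl_self : exchange A n k σ (inl (n, k)) = inr A := by
  simp [exchange]

theorem exchange_inl_of_ne {t : CantorK} (ht : t ≠ k) :
    exchange A n k σ (inl (n, t)) = inl (σ (firstDiff t k), drop (firstDiff t k + 1) t) := by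
  simp [exchange, ht]

theorem exchange_inl_of_mem {m : ℕ} (hm : m ∈ (A : Set ℕ) \ {n}) (t : CantorK) :
    exchange A n k σ (inl (m, t)) = inl (n, branchOff k (σ.symm ⟨m, hm⟩) t) := by
  simp [exchange, hm, show m ≠ n from hm.2]

theorem exchange_inl_of_notMem {m : ℕ} (hm : m ∉ (A : Set ℕ)) (hmn : m ≠ n) (t : CantorK) :
    exchange A n k σ (inl (m, t)) = inl (m, t) := by
  simp [exchange, hm, hmn]

theorem exchange_involutive : Function.Involutive (exchange A n k σ) := by
  rintro (⟨m, t⟩ | B)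
  · by_cases hmn : m = n
    · subst hmn
      by_cases htk : t = k
      · subst htk
        rw [exchange_inl_self, exchange_inr_self]
      · rw [exchange_inl_of_ne htk, exchange_inl_of_mem (σ _).2]
        simp [branchOff_firstDiff_drop htk]
    · by_cases hm : m ∈ (A : Set ℕ)
      · rw [exchange_inl_of_mem ⟨hm, hmn⟩, exchange_inl_of_ne (branchOff_ne t),
          firstDiff_branchOff, drop_branchOff]
        simp
      · rw [exchange_inl_of_notMem hm hmn, exchange_inl_of_notMem hm hmn]
  · by_cases hB : B = A
    · subst hB
      rw [exchange_inr_self, exchange_inl_self]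
    · rw [exchange_inr_of_ne hB, exchange_inr_of_ne hB]

theorem tendsto_exchange_inl_self :
    Tendsto (fun t => exchange A n k σ (inl (n, t))) (𝓝 k) (𝓝 (inr A)) := by
  refine (hasBasis_nhds_inr A).tendsto_right_iff.2 fun j _ => ?_
  have hσ : Tendsto (fun a => (σ a : ℕ)) atTop atTop :=
    ((Subtype.strictMono_coe _).comp σ.strictMono).tendsto_atTop
  have hj := eventually_nhdsWithin_iff.1 ((hσ.comp (tendsto_firstDiff k)).eventually_ge_atTop j)
  filter_upwards [hj] with s hs
  rcases eq_or_ne s k with rfl | hsk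
  · simp [exchange_inl_self]
  · rw [exchange_inl_of_ne hsk, inl_mem_basicOpen]
    exact ⟨(σ _).2.1, hs hsk⟩

theorem continuousAt_exchange_inl_of_ne {t : CantorK} (ht : t ≠ k) :
    ContinuousAt (fun s => exchange A n k σ (inl (n, s))) t := by
  have hloc : (fun s => inl (σ (firstDiff t k), drop (firstDiff t k + 1) s)) =ᶠ[𝓝 t]
      fun s => exchange A n k σ (inl (n, s)) := by
    filter_upwards [eventually_firstDiff_eq ht] with s ⟨hsk, hs⟩
    rw [exchange_inl_of_ne hsk, hs]
  exact ContinuousAt.congr (isOpenEmbedding_inl.continuous.comp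
    (continuous_const.prodMk (continuous_drop _))).continuousAt hloc

theorem continuousAt_exchange_inr_self : ContinuousAt (exchange A n k σ) (inr A) := by
  rw [ContinuousAt, exchange_inr_self]
  intro V hV
  have hW : {s | inl (n, s) ∈ V} ∈ 𝓝 k :=
    (isOpenEmbedding_inl.continuous.comp (Continuous.prodMk_right n)).continuousAt.preimage_mem_nhds
      hV
  obtain ⟨a, ha⟩ := eventually_atTop.1 (eventually_forall_branchOff_mem hW)
  refine (hasBasis_nhds_inr A).eventually_iff.2 ⟨max (σ a) (n + 1), trivial, ?_⟩
  rintro (⟨m, t⟩ | B) hy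
  · simp only [inl_mem_basicOpen, max_le_iff] at hy
    have hm : m ∈ (A : Set ℕ) \ {n} := ⟨hy.1, fun h => by simp only [mem_singleton_iff] at h; omega⟩
    rw [exchange_inl_of_mem hm]
    exact ha _ (σ.le_symm_apply.2 hy.2.1) t
  · simp only [inr_mem_basicOpen] at hy
    subst hy
    rw [exchange_inr_self]
    exact mem_of_mem_nhds hV

theorem continuousAt_exchange_inr_of_ne (h𝒜 : 𝒜.Pairwise fun A B => (A ∩ B).Finite)
    {B : 𝒜} (hB : B ≠ A) : ContinuousAt (exchange A n k σ) (inr B) := by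
  obtain ⟨i, hi⟩ := exists_disjoint_basicOpen h𝒜 (Ne.symm hB)
  have hid : id =ᶠ[𝓝 (inr B)] exchange A n k σ := by
    refine (hasBasis_nhds_inr B).eventually_iff.2 ⟨max i (n + 1), trivial, ?_⟩
    rintro (⟨m, t⟩ | C) hy
    · have hmA : m ∉ (A : Set ℕ) := fun hm => disjoint_left.1 hi
        (by simpa using hm : inl (m, t) ∈ basicOpen A 0) (basicOpen_anti B (le_max_left _ _) hy)
      simp only [inl_mem_basicOpen, max_le_iff] at hy
      rw [exchange_inl_of_notMem hmA (by omega)]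
      rfl
    · simp only [inr_mem_basicOpen] at hy
      subst hy
      exact (exchange_inr_of_ne hB).symm
  exact continuousAt_id.congr hid

theorem continuous_exchange (h𝒜 : 𝒜.Pairwise fun A B => (A ∩ B).Finite) :
    Continuous (exchange A n k σ) := by
  refine continuous_of_continuous_comp_inl (continuous_prod_of_discrete_left.2 fun m => ?_)
    fun B => ?_
  · by_cases hmn : m = n
    · subst hmn
      refine continuous_iff_continuousAt.2 fun t => ?_
      rcases eq_or_ne t k with rfl | htk
      · simpa [ContinuousAt, exchange_inl_self] using tendsto_exchange_inl_self
      · exact continuousAt_exchange_inl_of_ne htk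
    · by_cases hm : m ∈ (A : Set ℕ)
      · simp only [Function.comp_def, exchange_inl_of_mem ⟨hm, hmn⟩]
        exact isOpenEmbedding_inl.continuous.comp
          (continuous_const.prodMk (continuous_branchOff _ _))
      · simp only [Function.comp_def, exchange_inl_of_notMem hm hmn]
        exact isOpenEmbedding_inl.continuous.comp (Continuous.prodMk_right m)
  · by_cases hB : B = A
    · subst hB
      exact continuousAt_exchange_inr_self
    · exact continuousAt_exchange_inr_of_ne h𝒜 hB

end Exchange

theorem exists_homeomorph_inl_eq_inr (h𝒜 : 𝒜.Pairwise fun A B => (A ∩ B).Finite)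
    {A : 𝒜} (hA : (A : Set ℕ).Infinite) (p : ℕ × CantorK) :
    ∃ h : PsiX 𝒜 ≃ₜ PsiX 𝒜, h (inl p) = inr A := by
  have : Infinite ↥((A : Set ℕ) \ {p.1}) := (hA.sdiff (finite_singleton _)).to_subtype
  let σ := Nat.Subtype.orderIsoOfNat ((A : Set ℕ) \ {p.1})
  exact ⟨⟨(exchange_involutive (σ := σ) (k := p.2)).toPerm _, continuous_exchange h𝒜,
    continuous_exchange h𝒜⟩, exchange_inl_self⟩

theorem exists_homeomorph_apply_eq (h𝒜 : AlmostDisjointFamily 𝒜) (x y : PsiX 𝒜) :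
    ∃ h : PsiX 𝒜 ≃ₜ PsiX 𝒜, h x = y := by
  obtain ⟨A₀, hA₀⟩ := h𝒜.1.nonempty
  have toInr : ∀ (A : 𝒜) p, ∃ h : PsiX 𝒜 ≃ₜ PsiX 𝒜, h (inl p) = inr A := fun A =>
    exists_homeomorph_inl_eq_inr h𝒜.2.2 (h𝒜.2.1 A A.2)
  have toA₀ : ∀ x, ∃ h : PsiX 𝒜 ≃ₜ PsiX 𝒜, h x = inr ⟨A₀, hA₀⟩ := by
    rintro (p | B)
    · exact toInr _ p
    · obtain ⟨h₁, h₁B⟩ := toInr B (0, fun _ => false)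
      obtain ⟨h₂, h₂A₀⟩ := toInr ⟨A₀, hA₀⟩ (0, fun _ => false)
      exact ⟨h₁.symm.trans h₂, by
        change h₂ (h₁.symm (inr B)) = _
        rw [← h₁B, h₁.symm_apply_apply, h₂A₀]⟩
  obtain ⟨h₁, h₁x⟩ := toA₀ x
  obtain ⟨h₂, h₂y⟩ := toA₀ y
  exact ⟨h₁.trans h₂.symm, by rw [Homeomorph.trans_apply, h₁x, ← h₂y, h₂.symm_apply_apply]⟩

end PsiX

/-- The Cantor-set replacement `X` of a Ψ-space is zero-dimensional (has a base of
clopen sets), locally compact, and homogeneous. -/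
theorem stmt_9 (𝒜 : Set (Set ℕ)) (h𝒜 : AlmostDisjointFamily 𝒜) :
    (∃ B : Set (Set (PsiX 𝒜)), TopologicalSpace.IsTopologicalBasis B ∧
        ∀ U ∈ B, IsClopen U) ∧
    LocallyCompactSpace (PsiX 𝒜) ∧
    (∀ x y : PsiX 𝒜, ∃ h : PsiX 𝒜 ≃ₜ PsiX 𝒜, h x = y) := by
  have := PsiX.t2Space h𝒜.2.2
  exact ⟨⟨_, PsiX.isTopologicalBasis_isClopen, fun _ hU => hU⟩, inferInstance,
    PsiX.exists_homeomorph_apply_eq h𝒜⟩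
end

section
/- With X, Ψ(𝒜), and f : X → Ψ(𝒜) as above (Cantor-set replacement of the isolated points of a Ψ-space), the image f(Z) of every zero-set Z of X is a zero-set of Ψ(𝒜). -/
open Set

/-- A zero-set: the preimage of `0` under a continuous real-valued function. -/
def IsZeroSet {Y : Type*} [TopologicalSpace Y] (Z : Set Y) : Prop :=
  ∃ ξ : Y → ℝ, Continuous ξ ∧ Z = ξ ⁻¹' {0}

/-
The function `η p = min {|ξ x| : f x = p}` does the job. On a fibre `{n} × K` the minimum is
attained by compactness of the Cantor set, so `η` vanishes exactly on `f(Z)`. Continuity of `η`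
at `n` is free because `n` is isolated in `Ψ(𝒜)`; at `A ∈ 𝒜` it holds because every neighbourhood
of `A` in `X` contains a whole tail `U_n(A)` of fibres, so `ξ` is uniformly close to `ξ A` on all
fibres `{m} × K` with `m ∈ A` large, and hence so are the fibrewise minima.
-/

open Topology

variable {𝒜 : Set (Set ℕ)}

namespace PsiSpace

def tail (A : ↥𝒜) (n : ℕ) : Set (PsiSpace 𝒜) :=
  insert (Sum.inr A) (Sum.inl '' {m | m ∈ (A : Set ℕ) ∧ n ≤ m})

theorem isOpen_singleton_inl (n : ℕ) : IsOpen ({Sum.inl n} : Set (PsiSpace 𝒜)) :=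
  TopologicalSpace.GenerateOpen.basic _ (Or.inl ⟨n, rfl⟩)

theorem isOpen_tail (A : ↥𝒜) (n : ℕ) : IsOpen (tail A n) :=
  TopologicalSpace.GenerateOpen.basic _ (Or.inr ⟨A, n, rfl⟩)

theorem tail_mem_nhds (A : ↥𝒜) (n : ℕ) : tail A n ∈ nhds (X := PsiSpace 𝒜) (Sum.inr A) :=
  (isOpen_tail A n).mem_nhds (mem_insert _ _)

theorem continuous_of_forall_eventually {Y : Type*} [TopologicalSpace Y] {g : PsiSpace 𝒜 → Y}
    (hg : ∀ (A : ↥𝒜), ∀ V ∈ 𝓝 (g (Sum.inr A)),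
      ∃ n, ∀ m ∈ (A : Set ℕ), n ≤ m → g (Sum.inl m) ∈ V) :
    Continuous g := by
  rw [continuous_iff_continuousAt]
  rintro (n | A)
  · refine Filter.tendsto_def.mpr fun V hV => ?_
    filter_upwards [(isOpen_singleton_inl n).mem_nhds rfl]
    rintro _ rfl
    exact mem_preimage.mpr (mem_of_mem_nhds hV)
  · refine Filter.tendsto_def.mpr fun V hV => ?_
    obtain ⟨n, hn⟩ := hg A V hV
    filter_upwards [tail_mem_nhds A n]
    rintro _ (rfl | ⟨m, ⟨hmA, hnm⟩, rfl⟩)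
    exacts [mem_preimage.mpr (mem_of_mem_nhds hV), hn m hmA hnm]

end PsiSpace

namespace PsiX

def tail (A : ↥𝒜) (n : ℕ) : Set (PsiX 𝒜) :=
  insert (Sum.inr A) (Sum.inl '' {p : ℕ × CantorK | p.1 ∈ (A : Set ℕ) ∧ n ≤ p.1})

theorem exists_tail_subset_of_isOpen {A : ↥𝒜} {U : Set (PsiX 𝒜)} (hU : IsOpen U)
    (hA : Sum.inr A ∈ U) : ∃ n, tail A n ⊆ U := by
  induction hU with
  | basic s hs =>
    rcases hs with ⟨n, C, -, rfl⟩ | ⟨B, n, rfl⟩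
    · obtain ⟨_, -, h⟩ := hA
      exact absurd h Sum.inl_ne_inr
    · obtain rfl : A = B := by
        rcases hA with h | ⟨_, -, h⟩
        exacts [Sum.inr_injective h, absurd h Sum.inl_ne_inr]
      exact ⟨n, subset_rfl⟩
  | univ => exact ⟨0, subset_univ _⟩
  | inter s t _ _ ihs iht =>
    obtain ⟨n, hn⟩ := ihs hA.1
    obtain ⟨m, hm⟩ := iht hA.2
    refine ⟨max n m, subset_inter (fun x hx => hn ?_) (fun x hx => hm ?_)⟩ <;>
    · rcases hx with rfl | ⟨p, ⟨hpA, hp⟩, rfl⟩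
      · exact mem_insert _ _
      · exact Or.inr ⟨p, ⟨hpA, by omega⟩, rfl⟩
  | sUnion S _ ih =>
    obtain ⟨s, hsS, hAs⟩ := hA
    obtain ⟨n, hn⟩ := ih s hsS hAs
    exact ⟨n, hn.trans (subset_sUnion_of_mem hsS)⟩

theorem exists_tail_subset_of_mem_nhds {A : ↥𝒜} {U : Set (PsiX 𝒜)}
    (hU : U ∈ nhds (X := PsiX 𝒜) (Sum.inr A)) : ∃ n, tail A n ⊆ U := by
  obtain ⟨V, hVU, hV, hAV⟩ := mem_nhds_iff.mp hU
  obtain ⟨n, hn⟩ := exists_tail_subset_of_isOpen hV hAV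
  exact ⟨n, hn.trans hVU⟩

theorem continuous_inl_fiber (n : ℕ) :
    Continuous (Y := PsiX 𝒜) fun k : CantorK => Sum.inl (n, k) := by
  refine continuous_generateFrom_iff.mpr ?_
  have hmk : Continuous (Prod.mk n : CantorK → ℕ × CantorK) := by fun_prop
  rintro s (⟨m, C, hC, rfl⟩ | ⟨B, m, rfl⟩)
  · show IsOpen (Prod.mk n ⁻¹' ((Sum.inl : ℕ × CantorK → (ℕ × CantorK) ⊕ 𝒜) ⁻¹'
      (Sum.inl '' ({m} ×ˢ C))))
    rw [preimage_image_eq _ Sum.inl_injective]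
    exact ((isOpen_discrete {m}).prod hC).preimage hmk
  · show IsOpen (Prod.mk n ⁻¹' ((Sum.inl : ℕ × CantorK → (ℕ × CantorK) ⊕ 𝒜) ⁻¹'
      (insert (Sum.inr B) (Sum.inl '' {p | p.1 ∈ (B : Set ℕ) ∧ m ≤ p.1}))))
    rw [insert_eq, ← image_singleton, preimage_union, preimage_inl_image_inr, empty_union,
      preimage_image_eq _ Sum.inl_injective]
    exact ((isOpen_discrete {a : ℕ | a ∈ (B : Set ℕ) ∧ m ≤ a}).preimage continuous_fst).preimage hmk

/-- The real `⨅` has junk value `0` on sets unbounded below; for continuous `ξ` the fibres are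
compact, so it is a genuine minimum. -/
noncomputable def fiberInf (ξ : PsiX 𝒜 → ℝ) : PsiSpace 𝒜 → ℝ :=
  Sum.elim (fun n => ⨅ k, ξ (Sum.inl (n, k))) (fun A => ξ (Sum.inr A))

variable {ξ : PsiX 𝒜 → ℝ}

theorem fiberInf_nonneg (hξ : ∀ x, 0 ≤ ξ x) (p : PsiSpace 𝒜) : 0 ≤ fiberInf ξ p := by
  rcases p with n | A
  exacts [Real.iInf_nonneg fun k => hξ _, hξ _]

theorem exists_fiberInf_inl_eq (hξ : Continuous ξ) (n : ℕ) :
    ∃ k, fiberInf ξ (Sum.inl n) = ξ (Sum.inl (n, k)) := by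
  obtain ⟨k, hk⟩ :=
    (isCompact_range (hξ.comp (continuous_inl_fiber n))).sInf_mem (range_nonempty _)
  exact ⟨k, hk.symm⟩

theorem fiberInf_le (hξ : Continuous ξ) (x : PsiX 𝒜) : fiberInf ξ (psiCollapse 𝒜 x) ≤ ξ x := by
  rcases x with ⟨n, k⟩ | A
  · exact ciInf_le (isCompact_range (hξ.comp (continuous_inl_fiber n))).bddBelow k
  · exact le_rfl

theorem continuous_fiberInf (hξ : Continuous ξ) : Continuous (fiberInf ξ) := by
  refine PsiSpace.continuous_of_forall_eventually fun A V hV => ?_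
  obtain ⟨n, hn⟩ := exists_tail_subset_of_mem_nhds (hξ.continuousAt.preimage_mem_nhds hV)
  refine ⟨n, fun m hmA hnm => ?_⟩
  obtain ⟨k, hk⟩ := exists_fiberInf_inl_eq hξ m
  rw [hk]
  exact hn (Or.inr ⟨(m, k), ⟨hmA, hnm⟩, rfl⟩)

theorem fiberInf_preimage_zero (hξ : Continuous ξ) (h0 : ∀ x, 0 ≤ ξ x) :
    fiberInf ξ ⁻¹' {0} = psiCollapse 𝒜 '' (ξ ⁻¹' {0}) := by
  ext p
  constructor
  · intro hp
    rcases p with n | A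
    · obtain ⟨k, hk⟩ := exists_fiberInf_inl_eq hξ n
      exact ⟨Sum.inl (n, k), hk.symm.trans hp, rfl⟩
    · exact ⟨Sum.inr A, hp, rfl⟩
  · rintro ⟨x, hx, rfl⟩
    exact le_antisymm ((fiberInf_le hξ x).trans_eq hx) (fiberInf_nonneg h0 _)

end PsiX

theorem stmt_11_general (𝒜 : Set (Set ℕ))
    (Z : Set (PsiX 𝒜)) (hZ : IsZeroSet Z) :
    IsZeroSet (psiCollapse 𝒜 '' Z) := by
  obtain ⟨ξ, hξ, rfl⟩ := hZ
  refine ⟨PsiX.fiberInf fun x => |ξ x|, PsiX.continuous_fiberInf hξ.abs, ?_⟩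
  rw [PsiX.fiberInf_preimage_zero hξ.abs fun x => abs_nonneg _]
  simp only [preimage, mem_singleton_iff, abs_eq_zero]

/-- The image under the collapsing map `f : X → Ψ(𝒜)` of every zero-set of `X`
is a zero-set of `Ψ(𝒜)`. -/
theorem stmt_11 (𝒜 : Set (Set ℕ)) (h𝒜 : AlmostDisjointFamily 𝒜)
    (Z : Set (PsiX 𝒜)) (hZ : IsZeroSet Z) :
    IsZeroSet (psiCollapse 𝒜 '' Z) :=
  stmt_11_general 𝒜 Z hZ
end

section
/- A Tychonoff space X is almost compact (its Čech–Stone compactification adds at most one point) if and only if of any two disjoint zero-sets in X, at least one is compact. -/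
/-!
Disjoint zero-sets of `X` are completely separated, so their closures in `βX` are disjoint, and a
closed subset of `X` is compact as soon as its closure in `βX` misses the remainder `βX \ X`. If the
remainder has at most one point, one of the two closures misses it.

Conversely, a Urysohn function `f` on `βX` separating two remainder points `p`, `q` gives disjoint
zero-sets `{f ≤ 1/3}` and `{f ≥ 2/3}` of `X`. If one of them were compact, its image would be
closed in `βX` and would contain the dense trace on `X` of the neighbourhood `{f < 1/3}` of `p`
(resp. `{f > 2/3}` of `q`), which would put that point in `X`.
-/

open Set Topology unitInterval

lemma Set.subset_or_subset_of_disjoint_of_subsingleton_compl {α : Type*} {s a b : Set α}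
    (hs : sᶜ.Subsingleton) (hab : Disjoint a b) : a ⊆ s ∨ b ⊆ s := by
  by_contra! h
  obtain ⟨x, hxa, hxs⟩ := not_subset.mp h.1
  obtain ⟨y, hyb, hys⟩ := not_subset.mp h.2
  exact disjoint_left.mp hab hxa (hs hxs hys ▸ hyb)

section ZeroSet

variable {X : Type*} [TopologicalSpace X]

lemma IsZeroSet.isClosed {Z : Set X} (hZ : IsZeroSet Z) : IsClosed Z := by
  obtain ⟨ξ, hξ, rfl⟩ := hZ
  exact isClosed_singleton.preimage hξ

lemma isZeroSet_preimage_Iic {f : X → ℝ} (hf : Continuous f) (a : ℝ) :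
    IsZeroSet (f ⁻¹' Iic a) := by
  refine ⟨fun x ↦ max (f x - a) 0, by fun_prop, ?_⟩
  ext x
  simp

lemma isZeroSet_preimage_Ici {f : X → ℝ} (hf : Continuous f) (a : ℝ) :
    IsZeroSet (f ⁻¹' Ici a) := by
  refine ⟨fun x ↦ max (a - f x) 0, by fun_prop, ?_⟩
  ext x
  simp

lemma exists_continuous_unitInterval_of_disjoint_isZeroSet {Z₀ Z₁ : Set X}
    (h₀ : IsZeroSet Z₀) (h₁ : IsZeroSet Z₁) (hdisj : Disjoint Z₀ Z₁) :
    ∃ g : X → I, Continuous g ∧ MapsTo g Z₀ {0} ∧ MapsTo g Z₁ {1} := by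
  obtain ⟨ξ, hξ, rfl⟩ := h₀
  obtain ⟨η, hη, rfl⟩ := h₁
  have hden : ∀ x, |ξ x| + |η x| ≠ 0 := by
    intro x hx
    obtain ⟨hξx, hηx⟩ := (add_eq_zero_iff_of_nonneg (abs_nonneg _) (abs_nonneg _)).1 hx
    exact disjoint_left.mp hdisj (abs_eq_zero.1 hξx) (abs_eq_zero.1 hηx)
  -- the ratio already lies in `[0, 1]`; `projIcc` only spares proving it
  refine ⟨fun x ↦ projIcc 0 1 zero_le_one (|ξ x| / (|ξ x| + |η x|)),
    continuous_projIcc.comp (hξ.abs.div (hξ.abs.add hη.abs) hden), ?_, ?_⟩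
  · intro x (hx : ξ x = 0)
    simp [hx]
  · intro x (hx : η x = 0)
    have : |ξ x| ≠ 0 := by simpa [hx] using hden x
    simp [hx, div_self this]

end ZeroSet

section StoneCech

variable {X : Type*} [TopologicalSpace X]

lemma disjoint_closure_image_stoneCechUnit {Y : Type*} [TopologicalSpace Y] [T2Space Y]
    [CompactSpace Y] {g : X → Y} (hg : Continuous g) {s t : Set X} {a b : Set Y}
    (ha : IsClosed a) (hb : IsClosed b) (hab : Disjoint a b) (hs : MapsTo g s a)
    (ht : MapsTo g t b) :
    Disjoint (closure (stoneCechUnit '' s)) (closure (stoneCechUnit '' t)) := by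
  have hG := continuous_stoneCechExtend hg
  have closure_subset : ∀ {u : Set X} {c : Set Y}, IsClosed c → MapsTo g u c →
      closure (stoneCechUnit '' u) ⊆ stoneCechExtend hg ⁻¹' c := fun hc hu ↦
    closure_minimal (by rintro _ ⟨x, hx, rfl⟩; simpa [stoneCechExtend_stoneCechUnit] using hu hx)
      (hc.preimage hG)
  exact (hab.preimage _).mono (closure_subset ha hs) (closure_subset hb ht)

lemma IsClosed.isCompact_of_closure_image_stoneCechUnit_subset_range [CompletelyRegularSpace X]
    {Z : Set X} (hZ : IsClosed Z)
    (h : closure (stoneCechUnit '' Z) ⊆ range (stoneCechUnit : X → StoneCech X)) :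
    IsCompact Z :=
  (isInducing_stoneCechUnit.isCompact_preimage' isClosed_closure.isCompact h).of_isClosed_subset
    hZ fun _ hx ↦ subset_closure (mem_image_of_mem _ hx)

lemma subset_range_stoneCechUnit_of_preimage_subset_isCompact {W : Set (StoneCech X)}
    (hW : IsOpen W) {K : Set X} (hK : IsCompact K) (hWK : stoneCechUnit ⁻¹' W ⊆ K) :
    W ⊆ range (stoneCechUnit : X → StoneCech X) :=
  calc W ⊆ closure (W ∩ range stoneCechUnit) :=
        denseRange_stoneCechUnit.open_subset_closure_inter hW
    _ ⊆ closure (stoneCechUnit '' K) := by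
      gcongr
      rintro _ ⟨hx, y, rfl⟩
      exact mem_image_of_mem _ (hWK hx)
    _ = stoneCechUnit '' K := (hK.image continuous_stoneCechUnit).isClosed.closure_eq
    _ ⊆ range stoneCechUnit := image_subset_range _ _

end StoneCech

/-- A Tychonoff space `X` is almost compact (its Čech–Stone compactification adds at
most one point) iff of any two disjoint zero-sets of `X` at least one is compact. -/
theorem stmt_12 (X : Type*) [TopologicalSpace X] [T35Space X] :
    Cardinal.mk ↥((Set.range (stoneCechUnit : X → StoneCech X))ᶜ) ≤ 1 ↔
      ∀ Z₀ Z₁ : Set X, IsZeroSet Z₀ → IsZeroSet Z₁ → Disjoint Z₀ Z₁ →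
        IsCompact Z₀ ∨ IsCompact Z₁ := by
  rw [Cardinal.mk_le_one_iff_set_subsingleton]
  constructor
  · intro hrem Z₀ Z₁ h₀ h₁ hdisj
    obtain ⟨g, hg, hg₀, hg₁⟩ := exists_continuous_unitInterval_of_disjoint_isZeroSet h₀ h₁ hdisj
    have hcl := disjoint_closure_image_stoneCechUnit hg isClosed_singleton isClosed_singleton
      (disjoint_singleton.2 zero_ne_one) hg₀ hg₁
    exact (subset_or_subset_of_disjoint_of_subsingleton_compl hrem hcl).imp
      h₀.isClosed.isCompact_of_closure_image_stoneCechUnit_subset_range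
      h₁.isClosed.isCompact_of_closure_image_stoneCechUnit_subset_range
  · intro h p hp q hq
    by_contra hpq
    obtain ⟨f, hfp, hfq, -⟩ := exists_continuous_zero_one_of_isClosed isClosed_singleton
      isClosed_singleton (disjoint_singleton.2 hpq)
    have hφ : Continuous (f ∘ stoneCechUnit) := f.continuous.comp continuous_stoneCechUnit
    have hdisj : Disjoint ((f ∘ stoneCechUnit) ⁻¹' Iic (1 / 3 : ℝ))
        ((f ∘ stoneCechUnit) ⁻¹' Ici (2 / 3)) :=
      (Iic_disjoint_Ici.2 (by norm_num)).preimage _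
    rcases h _ _ (isZeroSet_preimage_Iic hφ _) (isZeroSet_preimage_Ici hφ _) hdisj with hc | hc
    · refine hp (subset_range_stoneCechUnit_of_preimage_subset_isCompact
        (isOpen_Iio.preimage f.continuous) hc (fun _ hx ↦ le_of_lt hx) ?_)
      simp [hfp (mem_singleton p)]
    · refine hq (subset_range_stoneCechUnit_of_preimage_subset_isCompact
        (isOpen_Ioi.preimage f.continuous) hc (fun _ hx ↦ le_of_lt hx) ?_)
      norm_num [hfq (mem_singleton q)]
end

section
/- Let X be a topological space that is locally 𝔠 and 𝔠-fair, and let κ ≤ 𝔠 be a regular cardinal such that the union of every strongly increasing κ-sequence of closed subsets of X is closed. If |X| > 𝔠, then for every subset A of X with |A| ≤ 𝔠 there exists a clopen set U ⊇ A with |U| = 𝔠 and Lindelöf number L(U) ≥ κ. -/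
/-!
As `X` is locally `𝔠` and `|X| > 𝔠`, there is an enlargement `S ↦ g S` with `S ⊆ int (g S)`
such that, when `|S| ≤ 𝔠`, also `|g S| ≤ 𝔠` and `g S ⊄ S`. Starting from a set of size `𝔠`
containing `A`, put `F α = cl (A ∪ ⋃_{β < α} g (F β))` for `α < κ`. By `𝔠`-fairness every
`F α` has size `𝔠`, and `F α ⊆ int F (α + 1)`, so `U = ⋃_{α < κ} F α` is open, and closed by the
hypothesis on `κ`. The cover of `U` by the sets `int F (α + 1)` has no subcover of size `< κ`:
by regularity of `κ` such a subcover would lie in a single `F γ`, which misses a point of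
`F (γ + 1)`.
-/

noncomputable def lindelofNumber {X : Type} [TopologicalSpace X] (s : Set X) : Cardinal :=
  sInf {κ | ∀ 𝒰 : Set (Set X), (∀ U ∈ 𝒰, IsOpen U) → s ⊆ ⋃₀ 𝒰 →
    ∃ 𝒱 ⊆ 𝒰, Cardinal.mk 𝒱 ≤ κ ∧ s ⊆ ⋃₀ 𝒱}

open Set Cardinal Topology

theorem le_lindelofNumber_of_isOpen_cover {X : Type} [TopologicalSpace X] {s : Set X}
    {κ : Cardinal} {𝒰 : Set (Set X)} (hopen : ∀ U ∈ 𝒰, IsOpen U) (hcover : s ⊆ ⋃₀ 𝒰)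
    (hsub : ∀ 𝒱 ⊆ 𝒰, s ⊆ ⋃₀ 𝒱 → κ ≤ #𝒱) : κ ≤ lindelofNumber s := by
  refine le_csInf ⟨#(Set X), fun 𝒰 _ h𝒰 => ⟨𝒰, subset_rfl, mk_set_le _, h𝒰⟩⟩ ?_
  intro c hc
  obtain ⟨𝒱, h𝒱𝒰, h𝒱c, h𝒱⟩ := hc 𝒰 hopen hcover
  exact (hsub 𝒱 h𝒱𝒰 h𝒱).trans h𝒱c

theorem le_lindelofNumber_biUnion {X : Type} [TopologicalSpace X] {κ : Cardinal}
    (hκ : κ.IsRegular) {F : Ordinal → Set X} (hmono : Monotone F)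
    (hint : ∀ α < κ.ord, F α ⊆ interior (F (α + 1)))
    (hgrow : ∀ α < κ.ord, ¬ F (α + 1) ⊆ F α) :
    κ ≤ lindelofNumber (⋃ α < κ.ord, F α) := by
  have hlim : Order.IsSuccLimit κ.ord := isSuccLimit_ord hκ.aleph0_le
  refine le_lindelofNumber_of_isOpen_cover (𝒰 := (fun α => interior (F (α + 1))) '' Iio κ.ord)
    (by rintro _ ⟨α, -, rfl⟩; exact isOpen_interior) ?_ ?_
  · intro x hx
    obtain ⟨α, hα, hxα⟩ := mem_iUnion₂.1 hx
    exact ⟨_, mem_image_of_mem _ hα, hint α hα hxα⟩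
  · intro 𝒱 h𝒱𝒰 h𝒱
    by_contra! h𝒱κ
    choose idx hidx hidxV using fun V : 𝒱 => h𝒱𝒰 V.2
    set γ := ⨆ V : 𝒱, idx V + 1
    have hγ : γ < κ.ord := Ordinal.iSup_lt_of_lt_cof (by rwa [hκ.cof_ord])
      fun V => hlim.add_one_lt (hidx V)
    have hUγ : (⋃ α < κ.ord, F α) ⊆ F γ := by
      refine h𝒱.trans (sUnion_subset fun V hV => ?_)
      refine (hidxV ⟨V, hV⟩).ge.trans ?_
      exact interior_subset.trans (hmono (Ordinal.le_iSup (fun V : 𝒱 => idx V + 1) ⟨V, hV⟩))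
    exact hgrow γ hγ ((subset_iUnion₂ (s := fun α (_ : α < κ.ord) => F α) _
      (hlim.add_one_lt hγ)).trans hUγ)

theorem isOpen_biUnion_of_subset_interior_succ {X : Type*} [TopologicalSpace X] {o : Ordinal}
    (ho : Order.IsSuccLimit o) {F : Ordinal → Set X}
    (hint : ∀ α < o, F α ⊆ interior (F (α + 1))) :
    IsOpen (⋃ α < o, F α) := by
  refine isOpen_iff_mem_nhds.2 fun x hx => ?_
  obtain ⟨α, hα, hxα⟩ := mem_iUnion₂.1 hx
  refine Filter.mem_of_superset (mem_interior_iff_mem_nhds.1 (hint α hα hxα)) ?_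
  exact subset_iUnion₂ (s := fun α (_ : α < o) => F α) _ (ho.add_one_lt hα)

section ClosureChain

variable {X : Type*} [TopologicalSpace X] (g : Set X → Set X) (A : Set X)

noncomputable def closureChain (α : Ordinal) : Set X :=
  closure (A ∪ ⋃ β < α, g (closureChain β))
termination_by α

theorem closureChain_eq (α : Ordinal) :
    closureChain g A α = closure (A ∪ ⋃ β < α, g (closureChain g A β)) := by
  rw [closureChain]

theorem isClosed_closureChain (α : Ordinal) : IsClosed (closureChain g A α) := by
  rw [closureChain_eq]
  exact isClosed_closure

theorem subset_closureChain (α : Ordinal) : A ⊆ closureChain g A α := by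
  rw [closureChain_eq]
  exact subset_union_left.trans subset_closure

theorem map_closureChain_subset {β α : Ordinal} (h : β < α) :
    g (closureChain g A β) ⊆ closureChain g A α := by
  rw [closureChain_eq g A α]
  exact (subset_iUnion₂ (s := fun β (_ : β < α) => g (closureChain g A β)) β h).trans
    (subset_union_right.trans subset_closure)

theorem monotone_closureChain : Monotone (closureChain g A) := by
  intro α γ h
  rw [closureChain_eq g A α, closureChain_eq g A γ]
  exact closure_mono (union_subset_union_right _
    (biUnion_mono (fun β (hβ : β < α) => hβ.trans_le h) fun _ _ => subset_rfl))

theorem map_closureChain_subset_succ (α : Ordinal) :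
    g (closureChain g A α) ⊆ closureChain g A (α + 1) :=
  map_closureChain_subset g A (Order.lt_add_one_iff.2 le_rfl)

theorem closureChain_subset_interior_succ (hg : ∀ S, S ⊆ interior (g S)) (α : Ordinal) :
    closureChain g A α ⊆ interior (closureChain g A (α + 1)) :=
  (hg _).trans (interior_mono (map_closureChain_subset_succ g A α))

theorem mk_closureChain {c : Cardinal} (hc : ℵ₀ ≤ c) (hg : ∀ S : Set X, #S ≤ c → #(g S) ≤ c)
    (hfair : ∀ S : Set X, #S = c → #(closure S) = c) (hA : #A = c) {α : Ordinal}
    (hα : α.card ≤ c) : #(closureChain g A α) = c := by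
  induction α using WellFoundedLT.induction with
  | _ α ih =>
    rw [closureChain_eq]
    refine hfair _ (le_antisymm ?_ (hA ▸ mk_le_mk_of_subset subset_union_left))
    have hstep : #(⋃ β < α, g (closureChain g A β)) ≤ c :=
      mk_biUnion_le_of_le hα hc _ fun β hβ =>
        hg _ (ih β hβ ((Ordinal.card_le_card hβ.le).trans hα)).le
    calc #(A ∪ ⋃ β < α, g (closureChain g A β) : Set X) ≤ c + c := (mk_union_le _ _).trans
          (add_le_add hA.le hstep)
      _ = c := add_eq_self hc

end ClosureChain

theorem exists_superset_mk_eq {X : Type*} {A : Set X} {c : Cardinal} (hc : ℵ₀ ≤ c)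
    (hA : #A ≤ c) (hX : c ≤ #X) : ∃ B, A ⊆ B ∧ #B = c := by
  obtain ⟨B, hB⟩ := le_mk_iff_exists_set.1 hX
  refine ⟨A ∪ B, subset_union_left, le_antisymm ?_ (hB ▸ mk_le_mk_of_subset subset_union_right)⟩
  exact ((mk_union_le _ _).trans (add_le_add hA hB.le)).trans_eq (add_eq_self hc)

theorem exists_enlargement_of_locally_le {X : Type*} [TopologicalSpace X] {c : Cardinal}
    (hc : ℵ₀ ≤ c) (hloc : ∀ x : X, ∃ U ∈ 𝓝 x, #U ≤ c) (hX : c < #X) :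
    ∃ g : Set X → Set X, ∀ S, S ⊆ interior (g S) ∧ (#S ≤ c → #(g S) ≤ c ∧ ¬ g S ⊆ S) := by
  choose nb hnb hnbc using hloc
  have : Nonempty X := mk_ne_zero_iff.1 (zero_le.trans_lt hX).ne'
  have hout : ∀ S : Set X, #S ≤ c → ∃ p, p ∉ S := by
    refine fun S hS => (ne_univ_iff_exists_notMem S).1 fun h => ?_
    rw [h, mk_univ] at hS
    exact hS.not_gt hX
  choose! pt hpt using hout
  refine ⟨fun S => insert (pt S) (⋃ x ∈ S, nb x), fun S => ⟨fun x hx => ?_, fun hS => ⟨?_, ?_⟩⟩⟩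
  · exact mem_interior_iff_mem_nhds.2
      (Filter.mem_of_superset (hnb x) ((subset_biUnion_of_mem hx).trans (subset_insert _ _)))
  · have hnbS : #(⋃ x ∈ S, nb x) ≤ c :=
      ((mk_biUnion_le _ _).trans (mul_le_mul' hS (ciSup_le' fun x => hnbc x))).trans_eq
        (mul_eq_self hc)
    exact mk_insert_le.trans ((add_le_add_left hnbS 1).trans_eq (add_one_of_aleph0_le hc))
  · exact fun h => hpt S hS (h (mem_insert _ _))

/-- Let `X` be locally `𝔠` and `𝔠`-fair, and let `κ ≤ 𝔠` be a regular cardinal such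
that the union of every strongly increasing `κ`-sequence of closed subsets of `X` is
closed. If `|X| > 𝔠`, then every `A ⊆ X` with `|A| ≤ 𝔠` is contained in a clopen set
`U` with `|U| = 𝔠` and `L(U) ≥ κ`. -/
theorem stmt_15 (X : Type) [TopologicalSpace X]
    (hloc : ∀ x : X, ∃ U ∈ nhds x, Cardinal.mk U ≤ Cardinal.continuum)
    (hfair : ∀ S : Set X, Cardinal.mk S = Cardinal.continuum →
      Cardinal.mk (closure S) = Cardinal.continuum)
    (κ : Cardinal) (hκreg : κ.IsRegular) (hκc : κ ≤ Cardinal.continuum)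
    (hclosed : ∀ F : Ordinal → Set X,
      (∀ α < κ.ord, IsClosed (F α)) →
      (∀ α < κ.ord, F α ⊆ interior (F (α + 1))) →
      IsClosed (⋃ α < κ.ord, F α))
    (hX : Cardinal.continuum < Cardinal.mk X)
    (A : Set X) (hA : Cardinal.mk A ≤ Cardinal.continuum) :
    ∃ U : Set X, IsClopen U ∧ A ⊆ U ∧ Cardinal.mk U = Cardinal.continuum ∧
      κ ≤ lindelofNumber U := by
  obtain ⟨g, hg⟩ := exists_enlargement_of_locally_le aleph0_le_continuum hloc hX
  obtain ⟨B, hAB, hB⟩ := exists_superset_mk_eq aleph0_le_continuum hA hX.le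
  set F := closureChain g B
  have hint (α : Ordinal) (_ : α < κ.ord) : F α ⊆ interior (F (α + 1)) :=
    closureChain_subset_interior_succ g B (fun S => (hg S).1) α
  have hF (α : Ordinal) (hα : α < κ.ord) : #(F α) = 𝔠 :=
    mk_closureChain g B aleph0_le_continuum (fun S hS => ((hg S).2 hS).1) hfair hB
      ((lt_ord.1 hα).le.trans hκc)
  have hgrow (α : Ordinal) (hα : α < κ.ord) : ¬ F (α + 1) ⊆ F α := fun h =>
    ((hg (F α)).2 (hF α hα).le).2 ((map_closureChain_subset_succ g B α).trans h)
  have hlim : Order.IsSuccLimit κ.ord := isSuccLimit_ord hκreg.aleph0_le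
  have hF₀ : F 0 ⊆ ⋃ α < κ.ord, F α :=
    subset_iUnion₂ (s := fun α (_ : α < κ.ord) => F α) 0 hlim.bot_lt
  refine ⟨⋃ α < κ.ord, F α, ⟨?_, ?_⟩, ?_, le_antisymm ?_ ?_, ?_⟩
  · exact hclosed F (fun α _ => isClosed_closureChain g B α) hint
  · exact isOpen_biUnion_of_subset_interior_succ hlim hint
  · exact hAB.trans ((subset_closureChain g B 0).trans hF₀)
  · exact mk_biUnion_le_of_le (by rwa [card_ord]) aleph0_le_continuum _ fun α hα => (hF α hα).le
  · exact (hF 0 hlim.bot_lt).ge.trans (mk_le_mk_of_subset hF₀)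
  · exact le_lindelofNumber_biUnion hκreg (monotone_closureChain g B) hint hgrow
end

section
/- Let X be a locally 𝔠 and 𝔠-fair topological space such that t(x,X) < cf(𝔠) for every x ∈ X. If |X| > 𝔠, then there is a clopen subset U of X with |U| = L(U) = 𝔠. -/
/-- The tightness of `X` at `x`: the least cardinal `τ` such that whenever
`x ∈ cl A` there is `B ⊆ A` with `|B| ≤ τ` and `x ∈ cl B`. -/
noncomputable def tightness {X : Type} [TopologicalSpace X] (x : X) : Cardinal :=
  sInf {τ | ∀ A : Set X, x ∈ closure A →
    ∃ B ⊆ A, Cardinal.mk B ≤ τ ∧ x ∈ closure B}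

open Cardinal Set

universe u

theorem Cardinal.mk_iUnion_le_of_le {α ι : Type u} {κ : Cardinal.{u}} (hκ : ℵ₀ ≤ κ)
    {f : ι → Set α} (hι : #ι ≤ κ) (hf : ∀ i, #(f i) ≤ κ) : #(⋃ i, f i) ≤ κ :=
  calc #(⋃ i, f i) ≤ #ι * ⨆ i, #(f i) := mk_iUnion_le f
    _ ≤ κ * κ := mul_le_mul' hι (ciSup_le' hf)
    _ = κ := mul_eq_self hκ

theorem Order.exists_forall_lt_of_mk_lt_cof {ι β : Type u} [LinearOrder ι] (f : β → ι)
    (h : #β < Order.cof ι) : ∃ a, ∀ b, f b < a := by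
  have hf : ¬ IsCofinal (range f) := fun hf => ((Order.cof_le hf).trans mk_range_le).not_gt h
  obtain ⟨a, ha⟩ := not_isCofinal_iff.1 hf
  exact ⟨a, fun b => ha _ (mem_range_self b)⟩

theorem Cardinal.exists_ord_le_lt_cof {c μ : Cardinal} (hc : ℵ₀ ≤ c) (hμ : μ < c) :
    ∃ o ≤ c.ord, μ < o.cof ∧ c.ord.cof ≤ o.cof := by
  by_cases hμc : μ < c.ord.cof
  · exact ⟨c.ord, le_rfl, hμc, le_rfl⟩
  · have hreg : (Order.succ μ).IsRegular :=
      isRegular_succ ((isRegular_cof (isSuccLimit_ord hc)).aleph0_le.trans (not_lt.1 hμc))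
    refine ⟨(Order.succ μ).ord, ord_le_ord.2 (Order.succ_le_of_lt hμ), ?_, ?_⟩ <;>
      rw [hreg.cof_ord]
    · exact Order.lt_succ_of_not_isMax (not_isMax μ)
    · exact (not_lt.1 hμc).trans (Order.le_succ μ)

theorem mk_transfiniteIterate_le {α J : Type u} [LinearOrder J] [SuccOrder J] [WellFoundedLT J]
    {φ : Set α → Set α} {κ : Cardinal.{u}} (hκ : ℵ₀ ≤ κ) (hJ : #J ≤ κ)
    (hφ : ∀ A : Set α, #A ≤ κ → #(φ A) ≤ κ) {A : Set α} (hA : #A ≤ κ) (j : J) :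
    #(transfiniteIterate φ j A : Set α) ≤ κ := by
  induction j using SuccOrder.limitRecOn with
  | isMin j hj => rwa [transfiniteIterate, SuccOrder.limitRecOn_isMin _ _ _ hj]
  | succ j hj ih => rw [transfiniteIterate_succ _ _ _ hj]; exact hφ _ ih
  | isSuccLimit j hj ih =>
    rw [transfiniteIterate_limit _ _ _ hj, iSup_eq_iUnion]
    exact mk_iUnion_le_of_le hκ ((mk_subtype_le _).trans hJ) fun k => ih k k.2

section Topology

variable {X : Type} [TopologicalSpace X]

theorem exists_subset_mk_le_tightness {x : X} {A : Set X} (hx : x ∈ closure A) :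
    ∃ B ⊆ A, #B ≤ tightness x ∧ x ∈ closure B :=
  csInf_mem (s := {τ | ∀ A : Set X, x ∈ closure A → ∃ B ⊆ A, #B ≤ τ ∧ x ∈ closure B})
    ⟨#X, fun A hA => ⟨A, Subset.rfl, mk_set_le A, hA⟩⟩ A hx

theorem closure_iUnion_subset_of_tightness_lt_cof {ι : Type} [LinearOrder ι] {F : ι → Set X}
    (hF : Monotone F) (ht : ∀ x : X, tightness x < Order.cof ι) :
    closure (⋃ i, F i) ⊆ ⋃ i, closure (F i) := by
  intro z hz
  obtain ⟨B, hBF, hB, hzB⟩ := exists_subset_mk_le_tightness hz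
  choose g hg using fun b : B => mem_iUnion.1 (hBF b.2)
  obtain ⟨i, hi⟩ := Order.exists_forall_lt_of_mk_lt_cof g (hB.trans_lt (ht z))
  exact mem_iUnion.2 ⟨i, closure_mono (fun b hb => hF (hi ⟨b, hb⟩).le (hg ⟨b, hb⟩)) hzB⟩

theorem isClosed_iUnion_of_tightness_lt_cof {ι : Type} [LinearOrder ι] {F : ι → Set X}
    (hF : Monotone F) (hclosed : ∀ i, IsClosed (F i))
    (ht : ∀ x : X, tightness x < Order.cof ι) : IsClosed (⋃ i, F i) :=
  isClosed_of_closure_subset <| (closure_iUnion_subset_of_tightness_lt_cof hF ht).trans <|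
    iUnion_mono fun i => (hclosed i).closure_subset

theorem lindelofNumber_le_mk (s : Set X) : lindelofNumber s ≤ #s := by
  refine csInf_le' fun 𝒰 _ hcover => ?_
  choose V hV𝒰 hxV using fun x : s => mem_sUnion.1 (hcover x.2)
  exact ⟨range V, range_subset_iff.2 hV𝒰, mk_range_le,
    fun x hx => mem_sUnion.2 ⟨_, mem_range_self ⟨x, hx⟩, hxV ⟨x, hx⟩⟩⟩

theorem le_lindelofNumber {s : Set X} {κ : Cardinal} (𝒰 : Set (Set X))
    (hopen : ∀ U ∈ 𝒰, IsOpen U) (hcover : s ⊆ ⋃₀ 𝒰)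
    (hsub : ∀ 𝒱 ⊆ 𝒰, s ⊆ ⋃₀ 𝒱 → κ ≤ #𝒱) : κ ≤ lindelofNumber s := by
  refine le_csInf ⟨#(Set X), fun 𝒰' _ hcover' => ⟨𝒰', Subset.rfl, mk_set_le _, hcover'⟩⟩ ?_
  intro τ hτ
  obtain ⟨𝒱, h𝒱𝒰, h𝒱τ, h𝒱cover⟩ := hτ 𝒰 hopen hcover
  exact (hsub 𝒱 h𝒱𝒰 h𝒱cover).trans h𝒱τ

theorem cof_le_lindelofNumber_of_clopen_chain {ι : Type} [LinearOrder ι]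
    (ht : ∀ x : X, tightness x < Order.cof ι) {C : ι → Set X} (hC : Monotone C)
    (hclopen : ∀ i, IsClopen (C i)) {x : ι → X} (hxC : ∀ i, x i ∈ C i)
    (hxC' : ∀ i j, i < j → x j ∉ C i) {U : Set X} (hxU : ∀ i, x i ∈ U) :
    Order.cof ι ≤ lindelofNumber U := by
  cases isEmpty_or_nonempty ι
  · simp
  set G : ι → Set X := fun i => (closure (x '' Ioi i))ᶜ
  have hCG : ∀ i, C i ⊆ G i := fun i =>
    subset_compl_comm.1 <| closure_minimal (image_subset_iff.2 fun j hj => hxC' i j hj)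
      (hclopen i).isOpen.isClosed_compl
  have hxG : ∀ i k, x k ∈ G i → k ≤ i := fun i k hk =>
    not_lt.1 fun hik => hk (subset_closure (mem_image_of_mem x hik))
  have hcover : ∀ z, ∃ i, z ∈ G i := by
    intro z
    by_contra! hz
    obtain ⟨i₀⟩ := ‹Nonempty ι›
    have hzC : z ∈ closure (⋃ i, C i) :=
      closure_mono ((image_subset_range _ _).trans (range_subset_iff.2 fun i =>
        mem_iUnion.2 ⟨i, hxC i⟩)) (not_not.1 (hz i₀))
    obtain ⟨i, hzi⟩ := mem_iUnion.1
      (closure_iUnion_subset_of_tightness_lt_cof hC ht hzC)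
    exact hz i (hCG i ((hclopen i).isClosed.closure_subset hzi))
  refine le_lindelofNumber (range G) (forall_mem_range.2 fun i => isClosed_closure.isOpen_compl)
    (fun z _ => let ⟨i, hi⟩ := hcover z; mem_sUnion.2 ⟨G i, mem_range_self i, hi⟩) ?_
  intro 𝒱 h𝒱 hU𝒱
  choose idx hidx using fun V : 𝒱 => h𝒱 V.2
  refine (Order.cof_le (s := range idx) fun k => ?_).trans mk_range_le
  obtain ⟨V, hV, hxV⟩ := mem_sUnion.1 (hU𝒱 (hxU k))
  exact ⟨idx ⟨V, hV⟩, mem_range_self _, hxG _ k ((hidx ⟨V, hV⟩).symm ▸ hxV)⟩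

theorem mk_closure_le_continuum (hfair : ∀ S : Set X, #S = 𝔠 → #(closure S) = 𝔠)
    (hX : 𝔠 ≤ #X) {S : Set X} (hS : #S ≤ 𝔠) : #(closure S) ≤ 𝔠 := by
  obtain ⟨T, hT⟩ := le_mk_iff_exists_set.1 hX
  have hST : #(S ∪ T : Set X) = 𝔠 :=
    le_antisymm ((mk_union_le S T).trans (add_le_of_le aleph0_le_continuum hS hT.le))
      (hT ▸ mk_le_mk_of_subset subset_union_right)
  exact (mk_le_mk_of_subset (closure_mono subset_union_left)).trans (hfair _ hST).le

theorem exists_isClopen_superset_mk_le_continuum (hloc : ∀ x : X, ∃ U ∈ nhds x, #U ≤ 𝔠)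
    (hfair : ∀ S : Set X, #S = 𝔠 → #(closure S) = 𝔠)
    (ht : ∀ x : X, tightness x < (ord 𝔠).cof) (hX : 𝔠 ≤ #X) {S : Set X} (hS : #S ≤ 𝔠) :
    ∃ C, IsClopen C ∧ S ⊆ C ∧ #C ≤ 𝔠 := by
  have hopen : ∀ y : X, ∃ O : Set X, IsOpen O ∧ y ∈ O ∧ #O ≤ 𝔠 := fun y =>
    let ⟨N, hN, hNc⟩ := hloc y
    ⟨interior N, isOpen_interior, mem_interior_iff_mem_nhds.2 hN,
      (mk_le_mk_of_subset interior_subset).trans hNc⟩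
  choose O hOopen hmemO hOcard using hopen
  set H : Set X → Set X := fun A => ⋃ y : closure A, O y
  have hH : ∀ A, A ⊆ H A := fun A y hy => mem_iUnion.2 ⟨⟨y, subset_closure hy⟩, hmemO y⟩
  have : NoMaxOrder (ord (𝔠 : Cardinal.{0})).ToType := noMaxOrder aleph0_le_continuum
  have : Nonempty (ord 𝔠).ToType := nonempty_ord_toType continuum_pos.ne'
  let := WellFoundedLT.toOrderBot (ord 𝔠).ToType
  set W : (ord 𝔠).ToType → Set X := fun j => transfiniteIterate H j S
  have hW : Monotone W := monotone_transfiniteIterate H S hH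
  have hnbhd : ∀ j, ∀ y ∈ closure (W j), O y ⊆ W (Order.succ j) := fun j y hy => by
    rw [show W (Order.succ j) = H (W j) from transfiniteIterate_succ _ _ _ (not_isMax j)]
    exact subset_iUnion (fun y : closure (W j) => O y) ⟨y, hy⟩
  have hcof : ∀ x : X, tightness x < Order.cof (ord 𝔠).ToType := by
    simpa only [Ordinal.cof_toType] using ht
  refine ⟨⋃ j, W j, ⟨?_, ?_⟩, ?_, ?_⟩
  · refine isClosed_of_closure_subset fun z hz => ?_
    obtain ⟨j, hzj⟩ := mem_iUnion.1 (closure_iUnion_subset_of_tightness_lt_cof hW hcof hz)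
    exact mem_iUnion.2 ⟨_, hnbhd j z hzj (hmemO z)⟩
  · refine isOpen_iff_forall_mem_open.2 fun z hz => ?_
    obtain ⟨j, hzj⟩ := mem_iUnion.1 hz
    exact ⟨O z, (hnbhd j z (subset_closure hzj)).trans (subset_iUnion W _), hOopen z, hmemO z⟩
  · exact (transfiniteIterate_bot H S).symm.subset.trans (subset_iUnion W ⊥)
  · have hJ : #(ord 𝔠).ToType ≤ 𝔠 := (mk_ord_toType 𝔠).le
    refine mk_iUnion_le_of_le aleph0_le_continuum hJ
      (mk_transfiniteIterate_le aleph0_le_continuum hJ (fun A hA => ?_) hS)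
    exact mk_iUnion_le_of_le aleph0_le_continuum (mk_closure_le_continuum hfair hX hA)
      fun y => hOcard y

theorem exists_isClopen_ssuperset_mk_le_continuum (hloc : ∀ x : X, ∃ U ∈ nhds x, #U ≤ 𝔠)
    (hfair : ∀ S : Set X, #S = 𝔠 → #(closure S) = 𝔠)
    (ht : ∀ x : X, tightness x < (ord 𝔠).cof) (hX : 𝔠 < #X) {S : Set X} (hS : #S ≤ 𝔠) :
    ∃ C, IsClopen C ∧ S ⊂ C ∧ #C ≤ 𝔠 := by
  obtain ⟨p, hp⟩ : Sᶜ.Nonempty := nonempty_compl.2 fun h => by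
    rw [h, mk_univ] at hS
    exact hS.not_gt hX
  obtain ⟨C, hC, hpC, hCc⟩ := exists_isClopen_superset_mk_le_continuum hloc hfair ht hX.le
    (mk_insert_le.trans (add_le_of_le aleph0_le_continuum hS (one_le_aleph0.trans
      aleph0_le_continuum)) : #(insert p S : Set X) ≤ 𝔠)
  exact ⟨C, hC, ssubset_of_ssubset_of_subset (ssubset_insert hp) hpC, hCc⟩

theorem exists_clopen_chain (hloc : ∀ x : X, ∃ U ∈ nhds x, #U ≤ 𝔠)
    (hfair : ∀ S : Set X, #S = 𝔠 → #(closure S) = 𝔠)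
    (ht : ∀ x : X, tightness x < (ord 𝔠).cof) (hX : 𝔠 < #X) :
    ∃ (C : (ord (𝔠 : Cardinal.{0})).ToType → Set X) (x : (ord 𝔠).ToType → X), Monotone C ∧
      (∀ i, IsClopen (C i)) ∧ (∀ i, #(C i) ≤ 𝔠) ∧ (∀ i, x i ∈ C i) ∧
      ∀ i j, i < j → x j ∉ C i := by
  have hstep : ∀ A : Set X, ∃ C, A ⊆ C ∧ (#A ≤ 𝔠 → IsClopen C ∧ A ⊂ C ∧ #C ≤ 𝔠) := fun A => by
    by_cases hA : #A ≤ 𝔠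
    · obtain ⟨C, hC, hAC, hCc⟩ :=
        exists_isClopen_ssuperset_mk_le_continuum hloc hfair ht hX hA
      exact ⟨C, hAC.subset, fun _ => ⟨hC, hAC, hCc⟩⟩
    · exact ⟨A, Subset.rfl, fun h => absurd h hA⟩
  choose H hH hHc using hstep
  have : NoMaxOrder (ord (𝔠 : Cardinal.{0})).ToType := noMaxOrder aleph0_le_continuum
  have : Nonempty (ord 𝔠).ToType := nonempty_ord_toType continuum_pos.ne'
  let := WellFoundedLT.toOrderBot (ord 𝔠).ToType
  set W : (ord 𝔠).ToType → Set X := fun j => transfiniteIterate H j ∅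
  have hW : Monotone W := monotone_transfiniteIterate H ∅ hH
  have hWc : ∀ j, #(W j) ≤ 𝔠 := mk_transfiniteIterate_le aleph0_le_continuum
    (mk_ord_toType 𝔠).le (fun A hA => (hHc A hA).2.2) (by simp)
  have hWsucc : ∀ j, W (Order.succ j) = H (W j) := fun j =>
    transfiniteIterate_succ _ _ _ (not_isMax j)
  choose x hxC hxW using fun j => exists_of_ssubset ((hHc (W j) (hWc j)).2.1)
  refine ⟨fun j => W (Order.succ j), x, hW.comp Order.succ_mono, fun j => ?_, fun j => hWc _,
    fun j => ?_, fun i j hij hx => hxW j (hW (Order.succ_le_of_lt hij) hx)⟩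
  · dsimp only
    rw [hWsucc]
    exact (hHc (W j) (hWc j)).1
  · dsimp only
    rw [hWsucc]
    exact hxC j

end Topology

/-- If `X` is locally `𝔠`, `𝔠`-fair, `t(x,X) < cf(𝔠)` for all `x`, and `|X| > 𝔠`,
then `X` has a clopen subset `U` with `|U| = L(U) = 𝔠`. -/
theorem stmt_16 (X : Type) [TopologicalSpace X]
    (hloc : ∀ x : X, ∃ U ∈ nhds x, Cardinal.mk U ≤ Cardinal.continuum)
    (hfair : ∀ S : Set X, Cardinal.mk S = Cardinal.continuum →
      Cardinal.mk (closure S) = Cardinal.continuum)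
    (ht : ∀ x : X, tightness x < (Cardinal.continuum.ord).cof)
    (hX : Cardinal.continuum < Cardinal.mk X) :
    ∃ U : Set X, IsClopen U ∧ Cardinal.mk U = Cardinal.continuum ∧
      lindelofNumber U = Cardinal.continuum := by
  obtain ⟨C, x, hC, hclopen, hCc, hxC, hxC'⟩ := exists_clopen_chain hloc hfair ht hX
  have hJ : #(ord 𝔠).ToType = 𝔠 := mk_ord_toType 𝔠
  have hx : Function.Injective x :=
    .of_lt_imp_ne fun i j hij hxij => hxC' i j hij (hxij ▸ hxC i)
  have hxU : ∀ i, x i ∈ ⋃ j, C j := fun i => mem_iUnion.2 ⟨i, hxC i⟩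
  have hU : #(⋃ j, C j) = 𝔠 := by
    refine le_antisymm (mk_iUnion_le_of_le aleph0_le_continuum hJ.le hCc) ?_
    calc 𝔠 = #(range x) := by rw [mk_range_eq x hx, hJ]
      _ ≤ #(⋃ j, C j) := mk_le_mk_of_subset (range_subset_iff.2 hxU)
  refine ⟨⋃ j, C j, ⟨isClosed_iUnion_of_tightness_lt_cof hC (fun j => (hclopen j).isClosed)
    (by simpa only [Ordinal.cof_toType] using ht), isOpen_iUnion fun j => (hclopen j).isOpen⟩,
    hU, le_antisymm ((lindelofNumber_le_mk _).trans hU.le) (le_of_forall_lt fun μ hμ => ?_)⟩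
  obtain ⟨o, ho, hμo, hco⟩ := exists_ord_le_lt_cof aleph0_le_continuum hμ
  obtain ⟨f⟩ : Nonempty (o.ToType ≤i (ord 𝔠).ToType) := by
    rw [← Ordinal.type_le_iff, Ordinal.type_toType, Ordinal.type_toType]
    exact ho
  refine hμo.trans_le (Ordinal.cof_toType o ▸ cof_le_lindelofNumber_of_clopen_chain
    (fun z => Ordinal.cof_toType o ▸ (ht z).trans_le hco) (hC.comp f.monotone)
    (fun i => hclopen (f i)) (fun i => hxC (f i))
    (fun i j hij => hxC' (f i) (f j) (f.strictMono hij)) (fun i => hxU (f i)))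
end

section
/- Every connected, locally 𝔠, sequential Hausdorff space has cardinality at most 𝔠. -/
/-!
Fix for each point `x` a neighbourhood `N x` of size at most `𝔠`. Starting from one point, close
off `ω₁` times under adding `N x` for every point `x` already present and the sequential closure of
every countable subset already present; by Hausdorffness such a sequential closure has size at most
`ℵ₀ ^ ℵ₀ = 𝔠`, so every stage, and the union `U` of all stages, has size at most `𝔠`. As `ω₁` has
uncountable cofinality, each countable subset of `U` lies in a single stage, so `U` contains the
sequential closure of each of its countable subsets; hence `U` is sequentially closed, so closed.
It is open as it contains a neighbourhood of each of its points, and connectedness gives `U = X`.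
-/

open Cardinal Ordinal Set Filter

universe u v

section ClosingOff

variable {α : Type u}

lemma mk_iUnion_le_continuum {ι : Type v} {f : ι → Set α} (hι : #ι ≤ 𝔠)
    (hf : ∀ i, #(f i) ≤ 𝔠) : #(⋃ i, f i) ≤ 𝔠 := by
  rw [← lift_le_continuum.{u, v}]
  calc lift.{v} #(⋃ i, f i) ≤ lift.{u} #ι * ⨆ i, lift.{v} #(f i) := mk_iUnion_le_lift f
    _ ≤ 𝔠 * 𝔠 :=
      mul_le_mul' (lift_le_continuum.2 hι) (ciSup_le' fun i ↦ lift_le_continuum.2 (hf i))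
    _ = 𝔠 := continuum_mul_self

lemma mk_countable_subsets_le_continuum {A : Set α} (hA : #A ≤ 𝔠) :
    #{C : Set α // C ⊆ A ∧ C.Countable} ≤ 𝔠 := by
  simp_rw [← le_aleph0_iff_set_countable]
  calc #{C : Set α // C ⊆ A ∧ #C ≤ ℵ₀} ≤ max #A ℵ₀ ^ ℵ₀ := mk_bounded_subset_le A ℵ₀
    _ ≤ 𝔠 ^ ℵ₀ := power_le_power_right (max_le hA aleph0_le_continuum)
    _ = 𝔠 := continuum_power_aleph0

lemma mk_Iio_le_continuum {o : Ordinal.{u}} (ho : o ≤ ω₁) : #(Iio o) ≤ 𝔠 := by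
  rw [Cardinal.mk_Iio_ordinal, lift_le_continuum]
  calc o.card ≤ (ω₁ : Ordinal.{u}).card := card_le_card ho
    _ = ℵ₁ := card_omega 1
    _ ≤ 𝔠 := aleph_one_le_continuum

variable (F : Set α → Set α) (A₀ : Set α)

noncomputable def closingOff : Ordinal.{u} → Set α
  | o => A₀ ∪ ⋃ (b : Iio o) (C : {C : Set α // C ⊆ closingOff b ∧ C.Countable}), F C
termination_by o => o
decreasing_by exact b.2

lemma closingOff_eq (o : Ordinal.{u}) : closingOff F A₀ o =
    A₀ ∪ ⋃ (b : Iio o) (C : {C : Set α // C ⊆ closingOff F A₀ b ∧ C.Countable}), F C := by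
  rw [closingOff]

lemma closingOff_mono : Monotone (closingOff F A₀) := by
  intro o₁ o₂ h
  rw [closingOff_eq F A₀ o₁, closingOff_eq F A₀ o₂]
  exact union_subset_union_right _ <| iUnion_subset fun b ↦
    subset_iUnion_of_subset ⟨b, b.2.trans_le h⟩ subset_rfl

lemma subset_closingOff (o : Ordinal.{u}) : A₀ ⊆ closingOff F A₀ o := by
  rw [closingOff_eq]
  exact subset_union_left

lemma apply_subset_closingOff_add_one {o : Ordinal.{u}} {C : Set α}
    (hCo : C ⊆ closingOff F A₀ o) (hC : C.Countable) : F C ⊆ closingOff F A₀ (o + 1) := by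
  rw [closingOff_eq]
  exact fun x hx ↦ Or.inr <| mem_iUnion₂.2 ⟨⟨o, lt_add_one o⟩, ⟨C, hCo, hC⟩, hx⟩

variable {F A₀}

lemma mk_closingOff_le (hF : ∀ C, C.Countable → #(F C) ≤ 𝔠) (h₀ : #A₀ ≤ 𝔠) {o : Ordinal.{u}}
    (ho : o < ω₁) : #(closingOff F A₀ o) ≤ 𝔠 := by
  induction o using WellFoundedLT.induction with
  | _ o ih =>
    rw [closingOff_eq]
    refine (mk_union_le _ _).trans (add_le_of_le aleph0_le_continuum h₀ ?_)
    exact mk_iUnion_le_continuum (mk_Iio_le_continuum ho.le) fun b ↦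
      mk_iUnion_le_continuum (mk_countable_subsets_le_continuum (ih b b.2 (b.2.trans ho)))
        fun C ↦ hF C C.2.2

theorem exists_superset_closed_under_countable_subsets
    (hF : ∀ C, C.Countable → #(F C) ≤ 𝔠) (h₀ : #A₀ ≤ 𝔠) :
    ∃ U, A₀ ⊆ U ∧ #U ≤ 𝔠 ∧ ∀ C ⊆ U, C.Countable → F C ⊆ U := by
  refine ⟨⋃ o : Iio ω₁, closingOff F A₀ o, ?_, ?_, ?_⟩
  · exact subset_iUnion_of_subset ⟨0, omega_pos 1⟩ (subset_closingOff F A₀ 0)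
  · exact mk_iUnion_le_continuum (mk_Iio_le_continuum le_rfl) fun o ↦ mk_closingOff_le hF h₀ o.2
  · intro C hCU hC
    choose o ho using fun x : C ↦ mem_iUnion.1 (hCU x.2)
    have : Countable C := hC.to_subtype
    have hsup : ⨆ x, (o x).1 < ω₁ := iSup_lt_omega_one fun x ↦ (o x).2
    have hCsup : C ⊆ closingOff F A₀ (⨆ x, (o x).1) := fun x hx ↦
      closingOff_mono F A₀ (Ordinal.le_iSup _ ⟨x, hx⟩) (ho ⟨x, hx⟩)
    exact subset_iUnion_of_subset ⟨_, (isSuccLimit_omega 1).add_one_lt hsup⟩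
      (apply_subset_closingOff_add_one F A₀ hCsup hC)

end ClosingOff

lemma mk_seqClosure_le {X : Type u} [TopologicalSpace X] [T2Space X] (A : Set X) :
    #(seqClosure A) ≤ #A ^ ℵ₀ := by
  choose u hu hlim using fun x : seqClosure A ↦ x.2
  have hinj : Function.Injective fun x n ↦ (⟨u x n, hu x n⟩ : A) := fun x y hxy ↦ by
    have huxy : u x = u y := funext fun n ↦ congrArg Subtype.val (congrFun hxy n)
    exact Subtype.ext <| tendsto_nhds_unique (hlim x) (huxy ▸ hlim y)
  simpa [mk_arrow] using mk_le_of_injective hinj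

lemma mk_seqClosure_le_continuum {X : Type u} [TopologicalSpace X] [T2Space X] {A : Set X}
    (hA : A.Countable) : #(seqClosure A) ≤ 𝔠 :=
  calc #(seqClosure A) ≤ #A ^ ℵ₀ := mk_seqClosure_le A
    _ ≤ ℵ₀ ^ ℵ₀ := power_le_power_right hA.le_aleph0
    _ = 𝔠 := aleph0_power_aleph0

/-- Every connected, locally `𝔠`, sequential Hausdorff space has cardinality
at most `𝔠`. -/
theorem stmt_19 (X : Type*) [TopologicalSpace X] [T2Space X] [ConnectedSpace X]
    [SequentialSpace X]
    (hloc : ∀ x : X, ∃ U ∈ nhds x, Cardinal.mk U ≤ Cardinal.continuum) :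
    Cardinal.mk X ≤ Cardinal.continuum := by
  choose N hN hNc using hloc
  obtain ⟨x₀⟩ := (inferInstance : Nonempty X)
  let F (C : Set X) : Set X := seqClosure C ∪ ⋃ x ∈ C, N x
  have hF (C : Set X) (hC : C.Countable) : #(F C) ≤ 𝔠 := by
    refine (mk_union_le _ _).trans (add_le_of_le aleph0_le_continuum
      (mk_seqClosure_le_continuum hC) ?_)
    rw [biUnion_eq_iUnion]
    exact mk_iUnion_le_continuum (hC.le_aleph0.trans aleph0_le_continuum) fun x ↦ hNc x
  obtain ⟨U, hx₀U, hU, hFU⟩ := exists_superset_closed_under_countable_subsets hF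
    (A₀ := {x₀}) (by simpa using one_le_aleph0.trans aleph0_le_continuum)
  have hopen : IsOpen U := isOpen_iff_mem_nhds.2 fun x hx ↦ mem_of_superset (hN x) <|
    subset_union_right.trans (hFU {x} (singleton_subset_iff.2 hx) (countable_singleton x))
      |>.trans' (subset_biUnion_of_mem (mem_singleton x))
  have hclosed : IsClosed U := IsSeqClosed.isClosed fun u x hu hlim ↦
    hFU (range u) (range_subset_iff.2 hu) (countable_range u)
      (Or.inl ⟨u, fun n ↦ mem_range_self n, hlim⟩)
  rw [← mk_univ, ← IsClopen.eq_univ ⟨hclosed, hopen⟩ ⟨x₀, hx₀U rfl⟩]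
  exact hU
end
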